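/- arXiv:2510.19524 — 10 statements merged into one kernel-verified Lean document; each statement's English description precedes it below -/
import Mathlib

section
/- Let a, b ∈ ℝ and let u : ℝ → ℂ be twice differentiable with u''(x) + a·u(x) + b·|u(x)|²·u(x) = 0 for all x ∈ ℝ. Then the function x ↦ Im(u(x)·conj(u'(x))) is constant on ℝ. -/
/-- The angular momentum `J = Im (u * conj u')` is conserved along solutions of the
profile equation `u'' + a u + b |u|^2 u = 0`. -/
theorem stmt_0 (a b : ℝ) (u : ℝ → ℂ)
    (hu : Differentiable ℝ u) (hu' : Differentiable ℝ (deriv u))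
    (hode : ∀ x : ℝ, deriv (deriv u) x + a * u x + b * ‖u x‖ ^ 2 * u x = 0) :
    ∀ x y : ℝ, (u x * (starRingEnd ℂ) (deriv u x)).im
      = (u y * (starRingEnd ℂ) (deriv u y)).im := by
  have key : ∀ x : ℝ, HasDerivAt
      (fun t => (u t * (starRingEnd ℂ) (deriv u t)).im) 0 x := by
    intro x
    have h1 : HasDerivAt u (deriv u x) x := (hu x).hasDerivAt
    have h2 : HasDerivAt (deriv u) (deriv (deriv u) x) x := (hu' x).hasDerivAt
    have h3 : HasDerivAt (fun t => (starRingEnd ℂ) (deriv u t))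
        ((starRingEnd ℂ) (deriv (deriv u) x)) x := h2.star
    have h4 := h1.mul h3
    have h5 := (Complex.imCLM.hasFDerivAt.comp_hasDerivAt x h4)
    have hdd : deriv (deriv u) x = -(a * u x + b * ‖u x‖ ^ 2 * u x) := by
      have := hode x; linear_combination this
    have him : (deriv u x * (starRingEnd ℂ) (deriv u x)
        + u x * (starRingEnd ℂ) (deriv (deriv u) x)).im = 0 := by
      rw [hdd]
      simp only [Complex.add_im, map_neg, map_add, map_mul]
      have e1 : (deriv u x * (starRingEnd ℂ) (deriv u x)).im = 0 := by
        rw [Complex.mul_conj]; simp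
      have e2 : (u x * (starRingEnd ℂ) ((a : ℂ) * u x
          + (b : ℂ) * (‖u x‖ : ℂ) ^ 2 * u x)).im = 0 := by
        simp only [map_add, map_mul, map_pow, Complex.conj_ofReal]
        have : u x * ((a : ℂ) * (starRingEnd ℂ) (u x)
            + (b : ℂ) * (‖u x‖ : ℂ) ^ 2 * (starRingEnd ℂ) (u x))
            = ((a : ℂ) + (b : ℂ) * (‖u x‖ : ℂ) ^ 2) * (u x * (starRingEnd ℂ) (u x)) := by
          ring
        rw [this, Complex.mul_conj]
        simp [← Complex.ofReal_pow]
      have : (deriv u x * (starRingEnd ℂ) (deriv u x)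
          + u x * (starRingEnd ℂ) (-((a : ℂ) * u x + (b : ℂ) * (‖u x‖ : ℂ) ^ 2 * u x))).im
          = 0 := by
        rw [map_neg, mul_neg]
        simp only [Complex.add_im, Complex.neg_im, e1]
        rw [e2]; ring
      simpa using this
    have h6 : Complex.imCLM (deriv u x * (starRingEnd ℂ) (deriv u x)
        + u x * (starRingEnd ℂ) (deriv (deriv u) x)) = 0 := him
    simpa only [Function.comp_def, Pi.mul_apply, Complex.imCLM_apply, h6] using h5
  intro x y
  have : ∀ z w : ℝ, (fun t => (u t * (starRingEnd ℂ) (deriv u t)).im) z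
      = (fun t => (u t * (starRingEnd ℂ) (deriv u t)).im) w := by
    intro z w
    have hc := is_const_of_deriv_eq_zero (f := fun t => (u t * (starRingEnd ℂ) (deriv u t)).im)
      (fun t => (key t).differentiableAt) (fun t => (key t).deriv)
    exact hc z w
  exact this x y
end

section
/- Let a, b ∈ ℝ, J ∈ ℝ with J ≠ 0, and let u : ℝ → ℂ be twice differentiable with u''(x) + a·u(x) + b·|u(x)|²·u(x) = 0 and Im(u(x)·conj(u'(x))) = J for all x ∈ ℝ. Then u(x) ≠ 0 for every x ∈ ℝ, the modulus r(x) = |u(x)| is twice differentiable, it satisfies r''(x) − J²/r(x)³ + a·r(x) + b·r(x)³ = 0 for all x, and for all x one has (1/2)·r'(x)² + V_J(r(x)) = (1/2)·|u'(x)|² + (a/2)·|u(x)|² + (b/4)·|u(x)|⁴. -/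
/-- If `u` solves the profile equation with nonzero angular momentum `J`, then `u` never
vanishes, its modulus `r = |u|` is twice differentiable, `r` satisfies
`r'' - J²/r³ + a r + b r³ = 0`, and the energy splits as `(1/2) r'² + V_J(r)`. -/
theorem stmt_2 (a b J : ℝ) (hJ : J ≠ 0) (u : ℝ → ℂ)
    (hu : Differentiable ℝ u) (hu' : Differentiable ℝ (deriv u))
    (hode : ∀ x : ℝ, deriv (deriv u) x + a * u x + b * ‖u x‖ ^ 2 * u x = 0)
    (hJeq : ∀ x : ℝ, (u x * (starRingEnd ℂ) (deriv u x)).im = J) :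
    (∀ x : ℝ, u x ≠ 0) ∧
    Differentiable ℝ (fun x : ℝ => ‖u x‖) ∧
    Differentiable ℝ (deriv (fun x : ℝ => ‖u x‖)) ∧
    (∀ x : ℝ, deriv (deriv (fun x : ℝ => ‖u x‖)) x - J ^ 2 / ‖u x‖ ^ 3
        + a * ‖u x‖ + b * ‖u x‖ ^ 3 = 0) ∧
    (∀ x : ℝ, (1/2) * (deriv (fun x : ℝ => ‖u x‖) x) ^ 2
        + (J ^ 2 / (2 * ‖u x‖ ^ 2) + a * ‖u x‖ ^ 2 / 2 + b * ‖u x‖ ^ 4 / 4)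
      = (1/2) * ‖deriv u x‖ ^ 2 + (a/2) * ‖u x‖ ^ 2 + (b/4) * ‖u x‖ ^ 4) := by
  set v : ℝ → ℂ := deriv u with hv
  set w : ℝ → ℂ := deriv v with hw
  have hne : ∀ x, u x ≠ 0 := by
    intro x hx
    apply hJ
    rw [← hJeq x, hx]
    simp
  have hnpos : ∀ x, (0:ℝ) < ‖u x‖ := fun x => norm_pos_iff.mpr (hne x)
  have hnne : ∀ x, ‖u x‖ ≠ 0 := fun x => (hnpos x).ne'
  have hud : ∀ x, HasDerivAt u (v x) x := fun x => (hu x).hasDerivAt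
  have hvd : ∀ x, HasDerivAt v (w x) x := fun x => (hu' x).hasDerivAt
  set s : ℝ → ℝ := fun x => ((starRingEnd ℂ) (u x) * v x).re with hs
  have hn2 : ∀ x, ‖u x‖ ^ 2 = (u x).re ^ 2 + (u x).im ^ 2 := by
    intro x
    rw [Complex.sq_norm, Complex.normSq_apply]
    ring
  have hv2 : ∀ x, ‖v x‖ ^ 2 = (v x).re ^ 2 + (v x).im ^ 2 := by
    intro x
    rw [Complex.sq_norm, Complex.normSq_apply]
    ring
  have hkey1 : ∀ x, s x ^ 2 + J ^ 2 = ‖v x‖ ^ 2 * ‖u x‖ ^ 2 := by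
    intro x
    rw [← hJeq x, hv2, hn2]
    simp only [hs, Complex.mul_re, Complex.mul_im, Complex.conj_re, Complex.conj_im]
    ring
  have hwre : ∀ x, (w x).re = -(a * (u x).re + b * ‖u x‖ ^ 2 * (u x).re) := by
    intro x
    have h := congrArg Complex.re (hode x)
    simp only [Complex.add_re, Complex.mul_re, Complex.ofReal_re, Complex.ofReal_im,
      Complex.zero_re, Complex.mul_im, ← Complex.ofReal_pow] at h
    linarith [h]
  have hwim : ∀ x, (w x).im = -(a * (u x).im + b * ‖u x‖ ^ 2 * (u x).im) := by
    intro x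
    have h := congrArg Complex.im (hode x)
    simp only [Complex.add_im, Complex.mul_im, Complex.ofReal_re, Complex.ofReal_im,
      Complex.zero_im, Complex.mul_re, ← Complex.ofReal_pow] at h
    linarith [h]
  have hkey2 : ∀ x, ((starRingEnd ℂ) (u x) * w x).re = -(a * ‖u x‖ ^ 2 + b * ‖u x‖ ^ 4) := by
    intro x
    simp only [Complex.mul_re, Complex.conj_re, Complex.conj_im, hwre x, hwim x]
    linear_combination (a + b * ‖u x‖ ^ 2) * hn2 x
  have hN : ∀ x, ‖u x‖ = Real.sqrt (Complex.normSq (u x)) := by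
    intro x; rw [Complex.norm_def]
  have hNd : ∀ x, HasDerivAt (fun x => Complex.normSq (u x)) (2 * s x) x := by
    intro x
    have h1 : HasDerivAt (fun x => ((starRingEnd ℂ) (u x) * u x).re)
        (((starRingEnd ℂ) (v x) * u x + (starRingEnd ℂ) (u x) * v x).re) x :=
      Complex.reCLM.hasFDerivAt.comp_hasDerivAt x (((hud x).star).mul (hud x))
    have heq : (fun x => Complex.normSq (u x)) = fun x => ((starRingEnd ℂ) (u x) * u x).re := by
      funext y
      simp only [Complex.normSq_apply, Complex.mul_re, Complex.conj_re, Complex.conj_im]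
      ring
    rw [heq]
    convert h1 using 1
    simp only [hs, Complex.add_re, Complex.mul_re, Complex.conj_re, Complex.conj_im]
    ring
  have hNne : ∀ x, Complex.normSq (u x) ≠ 0 := fun x => (Complex.normSq_pos.mpr (hne x)).ne'
  have hrd : ∀ x, HasDerivAt (fun x : ℝ => ‖u x‖) (s x / ‖u x‖) x := by
    intro x
    have h := (hNd x).sqrt (hNne x)
    have heq : (fun x : ℝ => ‖u x‖) = fun x => Real.sqrt (Complex.normSq (u x)) := by
      funext y; exact hN y
    have h2 : 2 * s x / (2 * Real.sqrt (Complex.normSq (u x))) = s x / ‖u x‖ := by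
      rw [← hN x, mul_div_mul_left _ _ (by norm_num : (2:ℝ) ≠ 0)]
    rw [heq, ← h2]
    exact h
  have hderiv1 : deriv (fun x : ℝ => ‖u x‖) = fun x => s x / ‖u x‖ := by
    funext x; exact (hrd x).deriv
  have hsd : ∀ x, HasDerivAt s (‖v x‖ ^ 2 + ((starRingEnd ℂ) (u x) * w x).re) x := by
    intro x
    have h1 : HasDerivAt (fun x => ((starRingEnd ℂ) (u x) * v x).re)
        (((starRingEnd ℂ) (v x) * v x + (starRingEnd ℂ) (u x) * w x).re) x :=
      Complex.reCLM.hasFDerivAt.comp_hasDerivAt x (((hud x).star).mul (hvd x))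
    convert h1 using 1
    simp only [Complex.add_re, Complex.mul_re, Complex.conj_re, Complex.conj_im, hv2 x]
    ring
  have hgd : ∀ x, HasDerivAt (fun x => s x / ‖u x‖)
      (((‖v x‖ ^ 2 + ((starRingEnd ℂ) (u x) * w x).re) * ‖u x‖ - s x * (s x / ‖u x‖)) / ‖u x‖ ^ 2) x :=
    fun x => (hsd x).div (hrd x) (hnne x)
  refine ⟨hne, fun x => (hrd x).differentiableAt, ?_, ?_, ?_⟩
  · rw [hderiv1]
    exact fun x => (hgd x).differentiableAt
  · intro x
    rw [hderiv1, (hgd x).deriv, hkey2 x]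
    have hr := hnne x
    have hVv : ‖v x‖ ^ 2 = (s x ^ 2 + J ^ 2) / ‖u x‖ ^ 2 := by
      rw [eq_div_iff (pow_ne_zero 2 hr)]
      linarith [hkey1 x]
    rw [hVv]
    field_simp
    ring
  · intro x
    rw [hderiv1]
    have hr := hnne x
    have hVv : ‖v x‖ ^ 2 = (s x ^ 2 + J ^ 2) / ‖u x‖ ^ 2 := by
      rw [eq_div_iff (pow_ne_zero 2 hr)]
      linarith [hkey1 x]
    rw [hVv]
    field_simp
    ring
end

section
/- Let a ∈ ℝ, b < 0 and J ∈ ℝ with J² > (4/27)·a³/b². Then for every r > 0 the derivative of the effective potential satisfies V_J'(r) = −J²/r³ + a·r + b·r³ < 0; in particular V_J is strictly decreasing on (0, ∞). -/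
lemma aux_hasDeriv (a b J r : ℝ) (hr : 0 < r) :
    HasDerivAt (fun r : ℝ => J ^ 2 / (2 * r ^ 2) + a * r ^ 2 / 2 + b * r ^ 4 / 4)
      (-J ^ 2 / r ^ 3 + a * r + b * r ^ 3) r := by
  have h2 : HasDerivAt (fun r : ℝ => 2 * r ^ 2) (2 * (2 * r)) r :=
    (hasDerivAt_pow 2 r).const_mul 2 |>.congr_deriv (by ring)
  have hne : 2 * r ^ 2 ≠ 0 := by positivity
  have ht1 : HasDerivAt (fun r : ℝ => J ^ 2 / (2 * r ^ 2))
      ((0 * (2 * r ^ 2) - J ^ 2 * (2 * (2 * r))) / (2 * r ^ 2) ^ 2) r :=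
    (hasDerivAt_const r (J ^ 2)).div h2 hne
  have ht2 : HasDerivAt (fun r : ℝ => a * r ^ 2 / 2) (a * (2 * r) / 2) r :=
    (((hasDerivAt_pow 2 r).const_mul a).div_const 2).congr_deriv (by norm_num)
  have ht3 : HasDerivAt (fun r : ℝ => b * r ^ 4 / 4) (b * (4 * r ^ 3) / 4) r :=
    ((hasDerivAt_pow 4 r).const_mul b).div_const 4 |>.congr_deriv (by norm_num)
  have := (ht1.add ht2).add ht3
  refine this.congr_deriv ?_
  field_simp
  ring

lemma aux_neg (a b J r : ℝ) (hb : b < 0) (hr : 0 < r)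
    (hJ : J ^ 2 > (4/27) * a ^ 3 / b ^ 2) :
    -J ^ 2 / r ^ 3 + a * r + b * r ^ 3 < 0 := by
  have hr3 : 0 < r ^ 3 := by positivity
  rw [div_add' _ _ _ hr3.ne', div_add' _ _ _ hr3.ne', div_neg_iff]
  right
  refine ⟨?_, hr3⟩
  have key : a * r ^ 4 + b * r ^ 6 < J ^ 2 := by
    rcases le_or_gt a 0 with ha | ha
    · have h1 : a * r ^ 4 ≤ 0 := mul_nonpos_of_nonpos_of_nonneg ha (by positivity)
      have h2 : b * r ^ 6 < 0 := mul_neg_of_neg_of_pos hb (by positivity)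
      nlinarith [sq_nonneg J]
    · have hb2 : (0:ℝ) < b ^ 2 := by nlinarith
      have hJ' : (4/27) * a ^ 3 < J ^ 2 * b ^ 2 := by
        rw [gt_iff_lt, div_lt_iff₀ hb2] at hJ
        linarith
      have h3 : (0:ℝ) < 3 * (-b) * r ^ 2 + a := by nlinarith [mul_pos (neg_pos.2 hb) (pow_pos hr 2)]
      have hmax : b ^ 2 * (a * r ^ 4 + b * r ^ 6) ≤ (4/27) * a ^ 3 := by
        nlinarith [mul_nonneg (sq_nonneg (3 * (-b) * r ^ 2 - 2 * a)) h3.le]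
      nlinarith
  nlinarith

/-- In the defocusing case `b < 0`, if `J² > (4/27) a³/b²` then the effective potential
`V_J(r) = J²/(2r²) + a r²/2 + b r⁴/4` has negative derivative `-J²/r³ + a r + b r³` on
`(0, ∞)`; in particular it is strictly decreasing there. -/
theorem stmt_3 (a b J : ℝ) (hb : b < 0) (hJ : J ^ 2 > (4/27) * a ^ 3 / b ^ 2) :
    (∀ r : ℝ, 0 < r →
      deriv (fun r : ℝ => J ^ 2 / (2 * r ^ 2) + a * r ^ 2 / 2 + b * r ^ 4 / 4) r
          = -J ^ 2 / r ^ 3 + a * r + b * r ^ 3 ∧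
      -J ^ 2 / r ^ 3 + a * r + b * r ^ 3 < 0) ∧
    StrictAntiOn (fun r : ℝ => J ^ 2 / (2 * r ^ 2) + a * r ^ 2 / 2 + b * r ^ 4 / 4)
      (Set.Ioi 0) := by
  refine ⟨fun r hr => ⟨(aux_hasDeriv a b J r hr).deriv, aux_neg a b J r hb hr hJ⟩, ?_⟩
  apply strictAntiOn_of_deriv_neg (convex_Ioi 0)
  · exact fun r hr => (aux_hasDeriv a b J r hr).differentiableAt.continuousAt.continuousWithinAt
  · intro r hr
    rw [interior_Ioi] at hr
    rw [(aux_hasDeriv a b J r hr).deriv]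
    exact aux_neg a b J r hb hr hJ
end

section
/- Let b < 0, a > 0 and 0 < J < √(4a³/(27b²)). Then there exist unique real numbers q, Q with 0 < q < √(a/3) < Q < √a such that J = q·(q² − a)/b = Q·(Q² − a)/b. Moreover, setting r_Q = √((Q² − a)/b) and r_q = √((q² − a)/b), the only critical points of V_J on (0, ∞) are r_Q and r_q; V_J has a strict local minimum at r_Q with value E₋(J) = (1/(4b))·(Q² − a)·(3Q² + a), a strict local maximum at r_q with value E₊(J) = (1/(4b))·(q² − a)·(3q² + a), and E₋(J) < E₊(J). -/
lemma hasDerivAt_V (a b J r : ℝ) (hr : r ≠ 0) :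
    HasDerivAt (fun r : ℝ => J ^ 2 / (2 * r ^ 2) + a * r ^ 2 / 2 + b * r ^ 4 / 4)
      (a * r + b * r ^ 3 - J ^ 2 / r ^ 3) r := by
  have h2 : HasDerivAt (fun r : ℝ => 2 * r ^ 2) (2 * (2 * r ^ 1)) r := by
    exact_mod_cast (hasDerivAt_pow 2 r).const_mul 2
  have h1 : HasDerivAt (fun r : ℝ => J ^ 2 / (2 * r ^ 2))
      ((0 * (2 * r ^ 2) - J ^ 2 * (2 * (2 * r ^ 1))) / (2 * r ^ 2) ^ 2) r :=
    (hasDerivAt_const r (J ^ 2)).div h2 (by positivity)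
  have h3 : HasDerivAt (fun r : ℝ => a * r ^ 2 / 2) (a * (2 * r ^ 1) / 2) r := by
    exact_mod_cast ((hasDerivAt_pow 2 r).const_mul a).div_const 2
  have h4 : HasDerivAt (fun r : ℝ => b * r ^ 4 / 4) (b * (4 * r ^ 3) / 4) r := by
    exact_mod_cast ((hasDerivAt_pow 4 r).const_mul b).div_const 4
  have H := (h1.add h3).add h4
  refine H.congr_deriv ?_
  field_simp
  ring

lemma helper_lemma (a b J u v w : ℝ) (hb : b < 0) (hu : 0 < u) (huv : u < v) (hw : w < 0)
    (hfact : ∀ r : ℝ, b * r ^ 6 + a * r ^ 4 - J ^ 2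
      = b * (r ^ 2 - u) * (r ^ 2 - v) * (r ^ 2 - w)) :
    (∀ r : ℝ, 0 < r →
      (deriv (fun r : ℝ => J ^ 2 / (2 * r ^ 2) + a * r ^ 2 / 2 + b * r ^ 4 / 4) r = 0 ↔
        r = Real.sqrt u ∨ r = Real.sqrt v)) ∧
    (∃ ε > 0, ∀ r : ℝ, r ≠ Real.sqrt u → |r - Real.sqrt u| < ε →
      J ^ 2 / (2 * Real.sqrt u ^ 2) + a * Real.sqrt u ^ 2 / 2 + b * Real.sqrt u ^ 4 / 4
        < J ^ 2 / (2 * r ^ 2) + a * r ^ 2 / 2 + b * r ^ 4 / 4) ∧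
    (∃ ε > 0, ∀ r : ℝ, r ≠ Real.sqrt v → |r - Real.sqrt v| < ε →
      J ^ 2 / (2 * r ^ 2) + a * r ^ 2 / 2 + b * r ^ 4 / 4
        < J ^ 2 / (2 * Real.sqrt v ^ 2) + a * Real.sqrt v ^ 2 / 2 + b * Real.sqrt v ^ 4 / 4) := by
  set V : ℝ → ℝ := fun r : ℝ => J ^ 2 / (2 * r ^ 2) + a * r ^ 2 / 2 + b * r ^ 4 / 4 with hV
  have hderiv : ∀ r : ℝ, 0 < r →
      deriv V r = b * (r ^ 2 - u) * (r ^ 2 - v) * (r ^ 2 - w) / r ^ 3 := by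
    intro r hr
    rw [(hasDerivAt_V a b J r hr.ne').deriv, ← hfact r]
    field_simp
    ring
  set rU := Real.sqrt u with hrU
  set rV := Real.sqrt v with hrV
  have hU2 : rU ^ 2 = u := Real.sq_sqrt hu.le
  have hV2 : rV ^ 2 = v := Real.sq_sqrt (hu.trans huv).le
  have hUpos : 0 < rU := Real.sqrt_pos.2 hu
  have hVpos : 0 < rV := Real.sqrt_pos.2 (hu.trans huv)
  have hUV : rU < rV := Real.sqrt_lt_sqrt hu.le huv
  -- continuity on positive sets
  have hcont : ∀ s : Set ℝ, (∀ x ∈ s, (0:ℝ) < x) → ContinuousOn V s := by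
    intro s hs x hx
    exact (hasDerivAt_V a b J x (hs x hx).ne').continuousAt.continuousWithinAt
  have hanti1 : StrictAntiOn V (Set.Icc (rU / 2) rU) := by
    apply strictAntiOn_of_deriv_neg (convex_Icc _ _)
      (hcont _ (fun x hx => by have := hx.1; linarith))
    intro x hx
    rw [interior_Icc] at hx
    obtain ⟨hx1, hx2⟩ := hx
    have hxpos : 0 < x := by linarith
    rw [hderiv x hxpos]
    have h1 : x ^ 2 < u := by nlinarith
    have h2 : x ^ 2 < v := by nlinarith
    have h3 : (0:ℝ) < x ^ 2 - w := by nlinarith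
    apply div_neg_of_neg_of_pos _ (by positivity)
    nlinarith [mul_pos (mul_pos (sub_pos.2 h1) (sub_pos.2 h2)) h3]
  have hmono : StrictMonoOn V (Set.Icc rU rV) := by
    apply strictMonoOn_of_deriv_pos (convex_Icc _ _)
      (hcont _ (fun x hx => lt_of_lt_of_le hUpos hx.1))
    intro x hx
    rw [interior_Icc] at hx
    obtain ⟨hx1, hx2⟩ := hx
    have hxpos : 0 < x := hUpos.trans hx1
    rw [hderiv x hxpos]
    have h1 : u < x ^ 2 := by nlinarith
    have h2 : x ^ 2 < v := by nlinarith
    have h3 : (0:ℝ) < x ^ 2 - w := by nlinarith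
    apply div_pos _ (by positivity)
    nlinarith [mul_pos (mul_pos (sub_pos.2 h1) (sub_pos.2 h2)) h3]
  have hanti2 : StrictAntiOn V (Set.Icc rV (rV + 1)) := by
    apply strictAntiOn_of_deriv_neg (convex_Icc _ _)
      (hcont _ (fun x hx => lt_of_lt_of_le hVpos hx.1))
    intro x hx
    rw [interior_Icc] at hx
    obtain ⟨hx1, hx2⟩ := hx
    have hxpos : 0 < x := hVpos.trans hx1
    rw [hderiv x hxpos]
    have h1 : u < x ^ 2 := by nlinarith
    have h2 : v < x ^ 2 := by nlinarith
    have h3 : (0:ℝ) < x ^ 2 - w := by nlinarith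
    apply div_neg_of_neg_of_pos _ (by positivity)
    nlinarith [mul_pos (mul_pos (sub_pos.2 h1) (sub_pos.2 h2)) h3]
  refine ⟨?_, ?_, ?_⟩
  · intro r hr
    rw [hderiv r hr]
    constructor
    · intro h
      have h3 : (0:ℝ) < r ^ 2 - w := by nlinarith
      have hnum : b * (r ^ 2 - u) * (r ^ 2 - v) * (r ^ 2 - w) = 0 := by
        field_simp at h
        simpa using h
      rcases mul_eq_zero.1 hnum with h' | h'
      · rcases mul_eq_zero.1 h' with h'' | h''
        · rcases mul_eq_zero.1 h'' with h3' | h3'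
          · exact absurd h3' hb.ne
          · left
            have : r ^ 2 = u := by linarith
            rw [← this, Real.sqrt_sq hr.le] at hrU
            exact hrU ▸ rfl
        · right
          have : r ^ 2 = v := by linarith
          rw [← this, Real.sqrt_sq hr.le] at hrV
          exact hrV ▸ rfl
      · exact absurd h' h3.ne'
    · rintro (rfl | rfl)
      · rw [hU2]; ring_nf
      · rw [hV2]; ring_nf
  · refine ⟨min (rU / 2) (rV - rU), lt_min (by positivity) (by linarith), fun r hne hdist => ?_⟩
    have hd1 : |r - rU| < rU / 2 := lt_of_lt_of_le hdist (min_le_left _ _)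
    have hd2 : |r - rU| < rV - rU := lt_of_lt_of_le hdist (min_le_right _ _)
    rw [abs_lt] at hd1 hd2
    rcases lt_or_gt_of_ne hne with h | h
    · exact hanti1 ⟨by linarith, le_of_lt h⟩ ⟨by linarith, le_refl _⟩ h
    · exact hmono ⟨le_refl _, by linarith⟩ ⟨le_of_lt h, by linarith⟩ h
  · refine ⟨min (rV - rU) 1, lt_min (by linarith) one_pos, fun r hne hdist => ?_⟩
    have hd1 : |r - rV| < rV - rU := lt_of_lt_of_le hdist (min_le_left _ _)
    have hd2 : |r - rV| < 1 := lt_of_lt_of_le hdist (min_le_right _ _)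
    rw [abs_lt] at hd1 hd2
    rcases lt_or_gt_of_ne hne with h | h
    · exact hmono ⟨by linarith, le_of_lt h⟩ ⟨by linarith, le_refl _⟩ h
    · exact hanti2 ⟨le_refl _, by linarith⟩ ⟨le_of_lt h, by linarith⟩ h

lemma cubic_deriv (a x : ℝ) : HasDerivAt (fun x : ℝ => x ^ 3 - a * x) (3 * x ^ 2 - a) x := by
  have h := (hasDerivAt_pow 3 x).sub ((hasDerivAt_id x).const_mul a)
  refine h.congr_deriv ?_
  push_cast
  ring

lemma exists_unique_pair (a b J : ℝ) (hb : b < 0) (ha : 0 < a)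
    (hJpos : 0 < J) (hJlt : J < Real.sqrt (4 * a ^ 3 / (27 * b ^ 2))) :
    ∃! qQ : ℝ × ℝ,
      0 < qQ.1 ∧ qQ.1 < Real.sqrt (a / 3) ∧ Real.sqrt (a / 3) < qQ.2 ∧ qQ.2 < Real.sqrt a ∧
      J = qQ.1 * (qQ.1 ^ 2 - a) / b ∧ J = qQ.2 * (qQ.2 ^ 2 - a) / b := by
  have hbne : b ≠ 0 := hb.ne
  have hnb : 0 < -b := neg_pos.2 hb
  set m := Real.sqrt (a / 3) with hm
  set M := Real.sqrt a with hM
  have ha3 : (0:ℝ) < a / 3 := by linarith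
  have hm2 : m ^ 2 = a / 3 := Real.sq_sqrt ha3.le
  have hM2 : M ^ 2 = a := Real.sq_sqrt ha.le
  have hmpos : 0 < m := Real.sqrt_pos.2 ha3
  have hMpos : 0 < M := Real.sqrt_pos.2 ha
  have hmM : m < M := Real.sqrt_lt_sqrt ha3.le (by linarith)
  -- the sqrt bound
  have hsq : Real.sqrt (4 * a ^ 3 / (27 * b ^ 2)) = 2 * a / 3 * m / (-b) := by
    have h1 : (2 * a / 3 * m / (-b)) ^ 2 = 4 * a ^ 3 / (27 * b ^ 2) := by
      rw [div_pow, mul_pow, hm2]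
      field_simp
      ring
    rw [← h1]
    exact Real.sqrt_sq (by positivity)
  have hbJ : -(2 * a / 3 * m) < b * J := by
    rw [hsq] at hJlt
    have := (lt_div_iff₀ hnb).1 hJlt
    nlinarith
  have hbJ0 : b * J < 0 := mul_neg_of_neg_of_pos hb hJpos
  have hgm : m ^ 3 - a * m = -(2 * a / 3 * m) := by
    linear_combination m * hm2
  have hgM : M ^ 3 - a * M = 0 := by
    linear_combination M * hM2
  have hcont : Continuous (fun x : ℝ => x ^ 3 - a * x) := by continuity
  -- existence of q
  have h1 : b * J ∈ Set.Ioo ((fun x : ℝ => x ^ 3 - a * x) m) ((fun x : ℝ => x ^ 3 - a * x) 0) := by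
    constructor
    · simpa [hgm] using hbJ
    · simpa using hbJ0
  obtain ⟨q, hqmem, hgq⟩ := intermediate_value_Ioo' hmpos.le hcont.continuousOn h1
  have h2 : b * J ∈ Set.Ioo ((fun x : ℝ => x ^ 3 - a * x) m) ((fun x : ℝ => x ^ 3 - a * x) M) := by
    constructor
    · simpa [hgm] using hbJ
    · simpa [hgM] using hbJ0
  obtain ⟨Q, hQmem, hgQ⟩ := intermediate_value_Ioo hmM.le hcont.continuousOn h2
  simp only at hgq hgQ
  -- monotonicity
  have hanti : StrictAntiOn (fun x : ℝ => x ^ 3 - a * x) (Set.Icc 0 m) := by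
    apply strictAntiOn_of_deriv_neg (convex_Icc _ _) hcont.continuousOn
    intro x hx
    rw [interior_Icc] at hx
    rw [(cubic_deriv a x).deriv]
    have : x ^ 2 < a / 3 := by nlinarith [hx.1, hx.2]
    linarith
  have hmono : StrictMonoOn (fun x : ℝ => x ^ 3 - a * x) (Set.Icc m M) := by
    apply strictMonoOn_of_deriv_pos (convex_Icc _ _) hcont.continuousOn
    intro x hx
    rw [interior_Icc] at hx
    rw [(cubic_deriv a x).deriv]
    have : a / 3 < x ^ 2 := by nlinarith [hx.1, hx.2]
    linarith
  refine ⟨(q, Q), ⟨hqmem.1, hqmem.2, hQmem.1, hQmem.2, ?_, ?_⟩, ?_⟩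
  · rw [eq_div_iff hbne]
    linear_combination -hgq
  · rw [eq_div_iff hbne]
    linear_combination -hgQ
  · rintro ⟨q', Q'⟩ ⟨h1', h2', h3', h4', h5', h6'⟩
    simp only at h1' h2' h3' h4' h5' h6' ⊢
    have hgq' : q' ^ 3 - a * q' = b * J := by
      rw [eq_div_iff hbne] at h5'
      linear_combination -h5'
    have hgQ' : Q' ^ 3 - a * Q' = b * J := by
      rw [eq_div_iff hbne] at h6'
      linear_combination -h6'
    have e1 : q' = q := by
      apply hanti.injOn ⟨h1'.le, h2'.le⟩ ⟨hqmem.1.le, hqmem.2.le⟩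
      simp only
      rw [hgq', hgq]
    have e2 : Q' = Q := by
      apply hmono.injOn ⟨h3'.le, h4'.le⟩ ⟨hQmem.1.le, hQmem.2.le⟩
      simp only
      rw [hgQ', hgQ]
    exact Prod.ext e1 e2

set_option maxHeartbeats 1000000 in
lemma key_lemma (a b J q Q : ℝ) (hb : b < 0) (ha : 0 < a)
    (hq0 : 0 < q) (hq1 : q < Real.sqrt (a / 3)) (hQ1 : Real.sqrt (a / 3) < Q)
    (hQ2 : Q < Real.sqrt a)
    (hJq : J = q * (q ^ 2 - a) / b) (hJQ : J = Q * (Q ^ 2 - a) / b) :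
      (∀ r : ℝ, 0 < r →
        (deriv (fun r : ℝ => J ^ 2 / (2 * r ^ 2) + a * r ^ 2 / 2 + b * r ^ 4 / 4) r = 0 ↔
          r = Real.sqrt ((Q ^ 2 - a) / b) ∨ r = Real.sqrt ((q ^ 2 - a) / b))) ∧
      (∃ ε > 0, ∀ r : ℝ, r ≠ Real.sqrt ((Q ^ 2 - a) / b) →
          |r - Real.sqrt ((Q ^ 2 - a) / b)| < ε →
          J ^ 2 / (2 * Real.sqrt ((Q ^ 2 - a) / b) ^ 2)
              + a * Real.sqrt ((Q ^ 2 - a) / b) ^ 2 / 2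
              + b * Real.sqrt ((Q ^ 2 - a) / b) ^ 4 / 4
            < J ^ 2 / (2 * r ^ 2) + a * r ^ 2 / 2 + b * r ^ 4 / 4) ∧
      (∃ ε > 0, ∀ r : ℝ, r ≠ Real.sqrt ((q ^ 2 - a) / b) →
          |r - Real.sqrt ((q ^ 2 - a) / b)| < ε →
          J ^ 2 / (2 * r ^ 2) + a * r ^ 2 / 2 + b * r ^ 4 / 4
            < J ^ 2 / (2 * Real.sqrt ((q ^ 2 - a) / b) ^ 2)
              + a * Real.sqrt ((q ^ 2 - a) / b) ^ 2 / 2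
              + b * Real.sqrt ((q ^ 2 - a) / b) ^ 4 / 4) ∧
      J ^ 2 / (2 * Real.sqrt ((Q ^ 2 - a) / b) ^ 2)
          + a * Real.sqrt ((Q ^ 2 - a) / b) ^ 2 / 2
          + b * Real.sqrt ((Q ^ 2 - a) / b) ^ 4 / 4
        = (1 / (4 * b)) * (Q ^ 2 - a) * (3 * Q ^ 2 + a) ∧
      J ^ 2 / (2 * Real.sqrt ((q ^ 2 - a) / b) ^ 2)
          + a * Real.sqrt ((q ^ 2 - a) / b) ^ 2 / 2
          + b * Real.sqrt ((q ^ 2 - a) / b) ^ 4 / 4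
        = (1 / (4 * b)) * (q ^ 2 - a) * (3 * q ^ 2 + a) ∧
      (1 / (4 * b)) * (Q ^ 2 - a) * (3 * Q ^ 2 + a)
        < (1 / (4 * b)) * (q ^ 2 - a) * (3 * q ^ 2 + a) := by
  have hbne : b ≠ 0 := hb.ne
  have ha3 : (0:ℝ) < a / 3 := by linarith
  have hq2 : q ^ 2 < a / 3 := (Real.lt_sqrt hq0.le).1 hq1
  have hQpos : 0 < Q := lt_trans (Real.sqrt_pos.2 ha3) hQ1
  have hQ2a : a / 3 < Q ^ 2 := (Real.sqrt_lt' hQpos).1 hQ1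
  have hQa : Q ^ 2 < a := (Real.lt_sqrt hQpos.le).1 hQ2
  have hqQ : q < Q := by nlinarith
  -- derive a = q² + qQ + Q²
  have hqQb : q * (q ^ 2 - a) = Q * (Q ^ 2 - a) := by
    have h := hJq.symm.trans hJQ
    field_simp at h
    linarith
  have ha' : a = q ^ 2 + q * Q + Q ^ 2 := by
    have h : (Q - q) * (q ^ 2 + q * Q + Q ^ 2 - a) = 0 := by linear_combination -hqQb
    rcases mul_eq_zero.1 h with h' | h'
    · exact absurd h' (by linarith)
    · linarith
  subst ha'
  subst hJq
  have hu : 0 < (Q ^ 2 - (q ^ 2 + q * Q + Q ^ 2)) / b := by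
    rw [div_pos_iff]
    exact Or.inr ⟨by nlinarith, hb⟩
  have hv' : 0 < (q ^ 2 - (q ^ 2 + q * Q + Q ^ 2)) / b := by
    rw [div_pos_iff]
    exact Or.inr ⟨by nlinarith, hb⟩
  have huv : (Q ^ 2 - (q ^ 2 + q * Q + Q ^ 2)) / b < (q ^ 2 - (q ^ 2 + q * Q + Q ^ 2)) / b := by
    have h : (q ^ 2 - (q ^ 2 + q * Q + Q ^ 2)) / b - (Q ^ 2 - (q ^ 2 + q * Q + Q ^ 2)) / b
        = (q ^ 2 - Q ^ 2) / b := by ring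
    have h2 : 0 < (q ^ 2 - Q ^ 2) / b := by
      rw [div_pos_iff]; exact Or.inr ⟨by nlinarith, hb⟩
    linarith
  have hw : q * Q / b < 0 := div_neg_of_pos_of_neg (mul_pos hq0 hQpos) hb
  have hfact : ∀ r : ℝ, b * r ^ 6 + (q ^ 2 + q * Q + Q ^ 2) * r ^ 4
      - (q * (q ^ 2 - (q ^ 2 + q * Q + Q ^ 2)) / b) ^ 2
      = b * (r ^ 2 - (Q ^ 2 - (q ^ 2 + q * Q + Q ^ 2)) / b)
        * (r ^ 2 - (q ^ 2 - (q ^ 2 + q * Q + Q ^ 2)) / b) * (r ^ 2 - q * Q / b) := by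
    intro r
    field_simp
    ring
  obtain ⟨H1, H2, H3⟩ := helper_lemma (q ^ 2 + q * Q + Q ^ 2) b
    (q * (q ^ 2 - (q ^ 2 + q * Q + Q ^ 2)) / b)
    ((Q ^ 2 - (q ^ 2 + q * Q + Q ^ 2)) / b) ((q ^ 2 - (q ^ 2 + q * Q + Q ^ 2)) / b)
    (q * Q / b) hb hu huv hw hfact
  have hU2 : Real.sqrt ((Q ^ 2 - (q ^ 2 + q * Q + Q ^ 2)) / b) ^ 2
      = (Q ^ 2 - (q ^ 2 + q * Q + Q ^ 2)) / b := Real.sq_sqrt hu.le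
  have hV2 : Real.sqrt ((q ^ 2 - (q ^ 2 + q * Q + Q ^ 2)) / b) ^ 2
      = (q ^ 2 - (q ^ 2 + q * Q + Q ^ 2)) / b := Real.sq_sqrt hv'.le
  have hU4 : Real.sqrt ((Q ^ 2 - (q ^ 2 + q * Q + Q ^ 2)) / b) ^ 4
      = ((Q ^ 2 - (q ^ 2 + q * Q + Q ^ 2)) / b) ^ 2 := by
    rw [show (4:ℕ) = 2 * 2 from rfl, pow_mul, hU2]
  have hV4 : Real.sqrt ((q ^ 2 - (q ^ 2 + q * Q + Q ^ 2)) / b) ^ 4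
      = ((q ^ 2 - (q ^ 2 + q * Q + Q ^ 2)) / b) ^ 2 := by
    rw [show (4:ℕ) = 2 * 2 from rfl, pow_mul, hV2]
  have hQne : Q ^ 2 - (q ^ 2 + q * Q + Q ^ 2) ≠ 0 := ne_of_lt (by nlinarith)
  have hqne : q ^ 2 - (q ^ 2 + q * Q + Q ^ 2) ≠ 0 := ne_of_lt (by nlinarith)
  refine ⟨H1, H2, H3, ?_, ?_, ?_⟩
  · rw [hU2, hU4]
    have e1 : Q ^ 2 - (q ^ 2 + q * Q + Q ^ 2) = -(q * (q + Q)) := by ring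
    have e2 : q ^ 2 - (q ^ 2 + q * Q + Q ^ 2) = -(Q * (q + Q)) := by ring
    rw [e1, e2]
    have hqQ0 : q + Q ≠ 0 := by positivity
    field_simp
    ring
  · rw [hV2, hV4]
    have e2 : q ^ 2 - (q ^ 2 + q * Q + Q ^ 2) = -(Q * (q + Q)) := by ring
    rw [e2]
    have hqQ0 : q + Q ≠ 0 := by positivity
    field_simp
    ring
  · have h4b : 1 / (4 * b) < 0 := div_neg_of_pos_of_neg one_pos (by linarith)
    have h6 : 0 < (Q - q) ^ 3 * (Q + q) :=
      mul_pos (pow_pos (by linarith) 3) (by linarith)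
    have h7 := mul_neg_of_neg_of_pos h4b h6
    have h8 : (1 / (4 * b)) * (Q ^ 2 - (q ^ 2 + q * Q + Q ^ 2)) * (3 * Q ^ 2 + (q ^ 2 + q * Q + Q ^ 2))
        = (1 / (4 * b)) * (q ^ 2 - (q ^ 2 + q * Q + Q ^ 2)) * (3 * q ^ 2 + (q ^ 2 + q * Q + Q ^ 2))
          + 1 / (4 * b) * ((Q - q) ^ 3 * (Q + q)) := by
      field_simp
      ring
    linarith

/-- Defocusing case `b < 0`, `a > 0`, `0 < J < √(4a³/(27b²))`: unique parametrization
`J = q(q²-a)/b = Q(Q²-a)/b` with `0 < q < √(a/3) < Q < √a`; the critical points of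
`V_J` on `(0,∞)` are exactly `r_Q = √((Q²-a)/b)` (strict local min, value `E₋(J)`) and
`r_q = √((q²-a)/b)` (strict local max, value `E₊(J)`), and `E₋(J) < E₊(J)`. -/
theorem stmt_4 (a b J : ℝ) (hb : b < 0) (ha : 0 < a)
    (hJpos : 0 < J) (hJlt : J < Real.sqrt (4 * a ^ 3 / (27 * b ^ 2))) :
    (∃! qQ : ℝ × ℝ,
      0 < qQ.1 ∧ qQ.1 < Real.sqrt (a / 3) ∧ Real.sqrt (a / 3) < qQ.2 ∧ qQ.2 < Real.sqrt a ∧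
      J = qQ.1 * (qQ.1 ^ 2 - a) / b ∧ J = qQ.2 * (qQ.2 ^ 2 - a) / b) ∧
    (∀ q Q : ℝ, 0 < q → q < Real.sqrt (a / 3) → Real.sqrt (a / 3) < Q → Q < Real.sqrt a →
      J = q * (q ^ 2 - a) / b → J = Q * (Q ^ 2 - a) / b →
      (∀ r : ℝ, 0 < r →
        (deriv (fun r : ℝ => J ^ 2 / (2 * r ^ 2) + a * r ^ 2 / 2 + b * r ^ 4 / 4) r = 0 ↔
          r = Real.sqrt ((Q ^ 2 - a) / b) ∨ r = Real.sqrt ((q ^ 2 - a) / b))) ∧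
      (∃ ε > 0, ∀ r : ℝ, r ≠ Real.sqrt ((Q ^ 2 - a) / b) →
          |r - Real.sqrt ((Q ^ 2 - a) / b)| < ε →
          J ^ 2 / (2 * Real.sqrt ((Q ^ 2 - a) / b) ^ 2)
              + a * Real.sqrt ((Q ^ 2 - a) / b) ^ 2 / 2
              + b * Real.sqrt ((Q ^ 2 - a) / b) ^ 4 / 4
            < J ^ 2 / (2 * r ^ 2) + a * r ^ 2 / 2 + b * r ^ 4 / 4) ∧
      (∃ ε > 0, ∀ r : ℝ, r ≠ Real.sqrt ((q ^ 2 - a) / b) →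
          |r - Real.sqrt ((q ^ 2 - a) / b)| < ε →
          J ^ 2 / (2 * r ^ 2) + a * r ^ 2 / 2 + b * r ^ 4 / 4
            < J ^ 2 / (2 * Real.sqrt ((q ^ 2 - a) / b) ^ 2)
              + a * Real.sqrt ((q ^ 2 - a) / b) ^ 2 / 2
              + b * Real.sqrt ((q ^ 2 - a) / b) ^ 4 / 4) ∧
      J ^ 2 / (2 * Real.sqrt ((Q ^ 2 - a) / b) ^ 2)
          + a * Real.sqrt ((Q ^ 2 - a) / b) ^ 2 / 2
          + b * Real.sqrt ((Q ^ 2 - a) / b) ^ 4 / 4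
        = (1 / (4 * b)) * (Q ^ 2 - a) * (3 * Q ^ 2 + a) ∧
      J ^ 2 / (2 * Real.sqrt ((q ^ 2 - a) / b) ^ 2)
          + a * Real.sqrt ((q ^ 2 - a) / b) ^ 2 / 2
          + b * Real.sqrt ((q ^ 2 - a) / b) ^ 4 / 4
        = (1 / (4 * b)) * (q ^ 2 - a) * (3 * q ^ 2 + a) ∧
      (1 / (4 * b)) * (Q ^ 2 - a) * (3 * Q ^ 2 + a)
        < (1 / (4 * b)) * (q ^ 2 - a) * (3 * q ^ 2 + a)) := by
  refine ⟨exists_unique_pair a b J hb ha hJpos hJlt, ?_⟩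
  intro q Q h1 h2 h3 h4 h5 h6
  exact key_lemma a b J q Q hb ha h1 h2 h3 h4 h5 h6
end

section
/- Let b > 0, a ∈ ℝ and J ∈ ℝ with J ≠ 0. Then the effective potential V_J has a unique critical point r* on (0, ∞), and V_J attains its global minimum over (0, ∞) at r*. Moreover, setting Q = J/r*², one has Q² = a + b·r*², J = Q·(Q² − a)/b, and V_J(r*) = (1/(4b))·(Q² − a)·(3Q² + a). -/
private lemma hasDerivAtV (a b J r : ℝ) (hr : r ≠ 0) :
    HasDerivAt (fun r : ℝ => J ^ 2 / (2 * r ^ 2) + a * r ^ 2 / 2 + b * r ^ 4 / 4)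
      ((a * r ^ 4 + b * r ^ 6 - J ^ 2) / r ^ 3) r := by
  have h2 : (2 : ℝ) * r ^ 2 ≠ 0 := by positivity
  have hd1 : HasDerivAt (fun r : ℝ => 2 * r ^ 2) (2 * (2 * r ^ 1)) r :=
    (hasDerivAt_pow 2 r).const_mul 2
  have hA : HasDerivAt (fun r : ℝ => J ^ 2 / (2 * r ^ 2))
      ((0 * (2 * r ^ 2) - J ^ 2 * (2 * (2 * r ^ 1))) / (2 * r ^ 2) ^ 2) r :=
    (hasDerivAt_const r (J ^ 2)).div hd1 h2
  have hB : HasDerivAt (fun r : ℝ => a * r ^ 2 / 2) (a * (2 * r ^ 1) / 2) r :=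
    ((hasDerivAt_pow 2 r).const_mul a).div_const 2
  have hC : HasDerivAt (fun r : ℝ => b * r ^ 4 / 4) (b * (4 * r ^ 3) / 4) r :=
    ((hasDerivAt_pow 4 r).const_mul b).div_const 4
  have := (hA.add hB).add hC
  refine this.congr_deriv ?_
  field_simp
  ring

private lemma phi_lt (a b J : ℝ) (hb : 0 < b) {x y : ℝ} (hx : 0 < x) (hxy : x < y)
    (h : J ^ 2 ≤ a * x ^ 4 + b * x ^ 6) (hJ : J ≠ 0) :
    a * x ^ 4 + b * x ^ 6 < a * y ^ 4 + b * y ^ 6 := by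
  have hJ2 : 0 < J ^ 2 := by positivity
  have hpos : 0 < x ^ 4 * (a + b * x ^ 2) := by nlinarith
  have hq : 0 < a + b * x ^ 2 := by
    by_contra hc
    push_neg at hc
    nlinarith [pow_pos hx 4]
  have h1 : 0 < y ^ 4 - x ^ 4 := by
    have := pow_lt_pow_left₀ (n := 4) hxy hx.le (by norm_num)
    linarith
  nlinarith [mul_pos hq h1, mul_pos (mul_pos hb (pow_pos (lt_trans hx hxy) 4))
    (show (0:ℝ) < y ^ 2 - x ^ 2 by nlinarith)]

/-- Focusing case `b > 0`, `J ≠ 0`: the effective potential `V_J` has a unique critical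
point `r*` on `(0,∞)`, where it attains its global minimum over `(0,∞)`; moreover with
`Q = J/r*²` one has `Q² = a + b r*²`, `J = Q(Q²-a)/b` and
`V_J(r*) = (1/(4b))(Q²-a)(3Q²+a)`. -/
theorem stmt_5 (a b J : ℝ) (hb : 0 < b) (hJ : J ≠ 0) :
    ∃ rs : ℝ, 0 < rs ∧
      deriv (fun r : ℝ => J ^ 2 / (2 * r ^ 2) + a * r ^ 2 / 2 + b * r ^ 4 / 4) rs = 0 ∧
      (∀ r : ℝ, 0 < r →
        deriv (fun r : ℝ => J ^ 2 / (2 * r ^ 2) + a * r ^ 2 / 2 + b * r ^ 4 / 4) r = 0 →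
        r = rs) ∧
      (∀ r : ℝ, 0 < r →
        J ^ 2 / (2 * rs ^ 2) + a * rs ^ 2 / 2 + b * rs ^ 4 / 4
          ≤ J ^ 2 / (2 * r ^ 2) + a * r ^ 2 / 2 + b * r ^ 4 / 4) ∧
      (J / rs ^ 2) ^ 2 = a + b * rs ^ 2 ∧
      J = (J / rs ^ 2) * ((J / rs ^ 2) ^ 2 - a) / b ∧
      J ^ 2 / (2 * rs ^ 2) + a * rs ^ 2 / 2 + b * rs ^ 4 / 4
        = (1 / (4 * b)) * ((J / rs ^ 2) ^ 2 - a) * (3 * (J / rs ^ 2) ^ 2 + a) := by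
  set V : ℝ → ℝ := fun r => J ^ 2 / (2 * r ^ 2) + a * r ^ 2 / 2 + b * r ^ 4 / 4 with hV
  set φ : ℝ → ℝ := fun r => a * r ^ 4 + b * r ^ 6 with hφ
  have hderiv : ∀ r : ℝ, 0 < r → deriv V r = (φ r - J ^ 2) / r ^ 3 := fun r hr =>
    (hasDerivAtV a b J r (ne_of_gt hr)).deriv
  have hJ2 : 0 < J ^ 2 := by positivity
  have key : ∀ x y : ℝ, 0 < x → x < y → J ^ 2 ≤ φ x → φ x < φ y :=
    fun x y hx hxy h => phi_lt a b J hb hx hxy h hJ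
  -- existence of root of φ = J²
  obtain ⟨rs, hrsmem, hrs⟩ : ∃ rs ∈ Set.Icc (0:ℝ) (max 1 ((|a| + J ^ 2) / b)),
      φ rs = J ^ 2 := by
    have hR1 : (1:ℝ) ≤ max 1 ((|a| + J ^ 2) / b) := le_max_left _ _
    have hR2 : (|a| + J ^ 2) / b ≤ max 1 ((|a| + J ^ 2) / b) := le_max_right _ _
    set R := max 1 ((|a| + J ^ 2) / b) with hR
    have hRpos : 0 < R := lt_of_lt_of_le one_pos hR1
    have hbR : |a| + J ^ 2 ≤ b * R := by
      rw [← div_le_iff₀' hb]; exact hR2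
    have hφR : J ^ 2 ≤ φ R := by
      have h1 : J ^ 2 ≤ a + b * R ^ 2 := by nlinarith [abs_nonneg a, neg_abs_le a]
      have h4 : (1:ℝ) ≤ R ^ 4 := one_le_pow₀ hR1
      have : φ R = R ^ 4 * (a + b * R ^ 2) := by simp [hφ]; ring
      nlinarith
    have hcont : ContinuousOn φ (Set.Icc 0 R) := by fun_prop
    have := intermediate_value_Icc (le_of_lt hRpos) hcont
    have hmem : J ^ 2 ∈ Set.Icc (φ 0) (φ R) := by
      constructor
      · simp [hφ]; positivity
      · exact hφR
    obtain ⟨rs, hrsm, hrseq⟩ := this hmem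
    exact ⟨rs, hrsm, hrseq⟩
  have hrspos : 0 < rs := by
    rcases lt_or_eq_of_le hrsmem.1 with h | h
    · exact h
    · exfalso; rw [← h] at hrs; simp [hφ] at hrs; exact hJ2.ne' hrs.symm
  -- key: any r with φ r = J² equals rs (uniqueness)
  have huniq : ∀ r : ℝ, 0 < r → φ r = J ^ 2 → r = rs := by
    intro r hr hreq
    rcases lt_trichotomy r rs with h | h | h
    · exact absurd (key r rs hr h hreq.ge) (by rw [hreq, hrs]; exact lt_irrefl _)
    · exact h
    · exact absurd (key rs r hrspos h hrs.ge) (by rw [hreq, hrs]; exact lt_irrefl _)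
  -- sign of φ - J² off rs
  have hlt : ∀ r : ℝ, 0 < r → r < rs → φ r < J ^ 2 := by
    intro r hr hrrs
    by_contra hc
    push_neg at hc
    have := key r rs hr hrrs hc
    rw [hrs] at this; linarith
  have hgt : ∀ r : ℝ, rs < r → J ^ 2 < φ r := by
    intro r hrrs
    have := key rs r hrspos hrrs hrs.ge
    rwa [hrs] at this
  have hcontV : ∀ s : Set ℝ, (∀ x ∈ s, x ≠ 0) → ContinuousOn V s := by
    intro s hs
    apply ContinuousOn.add
    apply ContinuousOn.add
    · exact ContinuousOn.div continuousOn_const (by fun_prop)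
        (fun x hx => mul_ne_zero two_ne_zero (pow_ne_zero 2 (hs x hx)))
    · fun_prop
    · fun_prop
  -- V is strictly decreasing on Ioc 0 rs, increasing on Ici rs
  have hanti : StrictAntiOn V (Set.Ioc 0 rs) := by
    apply strictAntiOn_of_deriv_neg (convex_Ioc 0 rs)
      (hcontV _ (fun x hx => ne_of_gt hx.1))
    intro x hx
    rw [interior_Ioc] at hx
    rw [hderiv x hx.1]
    exact div_neg_of_neg_of_pos (by linarith [hlt x hx.1 hx.2]) (pow_pos hx.1 3)
  have hmono : StrictMonoOn V (Set.Ici rs) := by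
    apply strictMonoOn_of_deriv_pos (convex_Ici rs)
      (hcontV _ (fun x hx => ne_of_gt (lt_of_lt_of_le hrspos hx)))
    intro x hx
    rw [interior_Ici] at hx
    have hxpos : 0 < x := lt_trans hrspos hx
    rw [hderiv x hxpos]
    exact div_pos (by linarith [hgt x hx]) (pow_pos hxpos 3)
  have hmin : ∀ r : ℝ, 0 < r → V rs ≤ V r := by
    intro r hr
    rcases lt_trichotomy r rs with h | h | h
    · exact le_of_lt (hanti ⟨hr, le_of_lt h⟩ ⟨hrspos, le_refl _⟩ h)
    · rw [h]
    · exact le_of_lt (hmono (Set.self_mem_Ici) (le_of_lt h) h)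
  have hc : a * rs ^ 4 + b * rs ^ 6 = J ^ 2 := hrs
  have hrs2 : rs ^ 2 ≠ 0 := pow_ne_zero 2 hrspos.ne'
  have hQ2 : (J / rs ^ 2) ^ 2 = a + b * rs ^ 2 := by
    field_simp
    nlinarith [hc]
  refine ⟨rs, hrspos, ?_, ?_, hmin, hQ2, ?_, ?_⟩
  · rw [hderiv rs hrspos, hrs]; simp
  · intro r hr hd
    rw [hderiv r hr, div_eq_zero_iff] at hd
    rcases hd with h | h
    · exact huniq r hr (by linarith)
    · exact absurd h (by positivity)
  · rw [hQ2]
    field_simp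
    ring
  · rw [hQ2]
    field_simp
    ring_nf
    nlinarith [hc]
end

section
/- Let a, b, E, J ∈ ℝ with b ≠ 0, and let y₁, y₂, y₃ ∈ ℝ satisfy 0 < y₁ < y₂, b·(y − y₃) > 0 for all y ∈ [y₁, y₂], and the polynomial identity −b·y³ − 2a·y² + 4E·y − 2J² = −b·(y − y₁)·(y − y₂)·(y − y₃) for all y ∈ ℝ. Then, with V_J(r) = J²/(2r²) + a·r²/2 + b·r⁴/4 and S(φ) = y₁·cos²φ + y₂·sin²φ, the following integral identities hold: 2·∫_{√y₁}^{√y₂} (2(E − V_J(r)))^{−1/2} dr = √2·∫_{y₁}^{y₂} (−b·(y − y₁)·(y − y₂)·(y − y₃))^{−1/2} dy = 2√2·∫_0^{π/2} (b·(S(φ) − y₃))^{−1/2} dφ. -/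
open intervalIntegral Real

private lemma halg1 (s p t : ℝ) (hs : 0 < s) (hp : 0 < p) (ht : 0 < t) :
    1 / (2 * s) * (1 / (p / (t * s))) = t / 2 * (1 / p) := by
  field_simp

private lemma halg2 (A s c sc : ℝ) (hs : s ≠ 0) (hc : c ≠ 0) (hA : A ≠ 0) (hsc : sc ≠ 0) :
    A * (2 * s * c) * (1 / (sc * (A * s * c))) = 2 * (1 / sc) := by
  field_simp

/-- The three expressions for the period function `T(J,E)` (change of variables
`r = √y` and `y = S(φ) = y₁ cos²φ + y₂ sin²φ`). -/
theorem stmt_7 (a b E J : ℝ) (hb : b ≠ 0) (y₁ y₂ y₃ : ℝ)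
    (h1 : 0 < y₁) (h12 : y₁ < y₂)
    (hby3 : ∀ y ∈ Set.Icc y₁ y₂, 0 < b * (y - y₃))
    (hpoly : ∀ y : ℝ, -b * y ^ 3 - 2 * a * y ^ 2 + 4 * E * y - 2 * J ^ 2
        = -b * (y - y₁) * (y - y₂) * (y - y₃)) :
    (2 * ∫ r in Real.sqrt y₁..Real.sqrt y₂,
        1 / Real.sqrt (2 * (E - (J ^ 2 / (2 * r ^ 2) + a * r ^ 2 / 2 + b * r ^ 4 / 4)))
      = Real.sqrt 2 * ∫ y in y₁..y₂,
          1 / Real.sqrt (-b * (y - y₁) * (y - y₂) * (y - y₃))) ∧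
    (Real.sqrt 2 * ∫ y in y₁..y₂,
        1 / Real.sqrt (-b * (y - y₁) * (y - y₂) * (y - y₃))
      = 2 * Real.sqrt 2 * ∫ φ in (0:ℝ)..(Real.pi / 2),
          1 / Real.sqrt (b * ((y₁ * Real.cos φ ^ 2 + y₂ * Real.sin φ ^ 2) - y₃))) := by
  have hy2 : (0:ℝ) < y₂ := h1.trans h12
  have hPpos : ∀ y ∈ Set.Ioo y₁ y₂, 0 < -b * (y - y₁) * (y - y₂) * (y - y₃) := by
    intro y hy
    have h3 := hby3 y ⟨hy.1.le, hy.2.le⟩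
    nlinarith [mul_pos h3 (mul_pos (sub_pos.2 hy.1) (sub_pos.2 hy.2))]
  set F : ℝ → ℝ := fun r =>
    1 / Real.sqrt (2 * (E - (J ^ 2 / (2 * r ^ 2) + a * r ^ 2 / 2 + b * r ^ 4 / 4))) with hF
  set G : ℝ → ℝ := fun y => 1 / Real.sqrt (-b * (y - y₁) * (y - y₂) * (y - y₃)) with hG
  set H : ℝ → ℝ := fun φ =>
    1 / Real.sqrt (b * ((y₁ * Real.cos φ ^ 2 + y₂ * Real.sin φ ^ 2) - y₃)) with hH
  constructor
  · -- first equality, substitution r = √y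
    have himg : Real.sqrt '' Set.Ioo y₁ y₂ = Set.Ioo (Real.sqrt y₁) (Real.sqrt y₂) := by
      ext x
      constructor
      · rintro ⟨y, hy, rfl⟩
        exact ⟨Real.sqrt_lt_sqrt h1.le hy.1, Real.sqrt_lt_sqrt (h1.trans hy.1).le hy.2⟩
      · rintro ⟨hx1, hx2⟩
        have hx0 : 0 < x := lt_of_le_of_lt (Real.sqrt_nonneg _) hx1
        exact ⟨x ^ 2, ⟨(Real.sqrt_lt' hx0).mp hx1, (Real.lt_sqrt hx0.le).mp hx2⟩,
          Real.sqrt_sq hx0.le⟩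
    have hderiv : ∀ y ∈ Set.Ioo y₁ y₂,
        HasDerivWithinAt Real.sqrt (1 / (2 * Real.sqrt y)) (Set.Ioo y₁ y₂) y := fun y hy =>
      (Real.hasDerivAt_sqrt (ne_of_gt (h1.trans hy.1))).hasDerivWithinAt
    have hinj : Set.InjOn Real.sqrt (Set.Ioo y₁ y₂) := by
      intro u hu v hv h
      rw [← Real.sq_sqrt (h1.trans hu.1).le, ← Real.sq_sqrt (h1.trans hv.1).le, h]
    have key := MeasureTheory.integral_image_eq_integral_abs_deriv_smul
      measurableSet_Ioo hderiv hinj F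
    rw [himg] at key
    have hcong : ∫ y in Set.Ioo y₁ y₂, |1 / (2 * Real.sqrt y)| • F (Real.sqrt y)
        = ∫ y in Set.Ioo y₁ y₂, (Real.sqrt 2 / 2) * G y := by
      refine MeasureTheory.setIntegral_congr_fun measurableSet_Ioo fun y hy => ?_
      have hy0 : 0 < y := h1.trans hy.1
      have hs0 : 0 < Real.sqrt y := Real.sqrt_pos.2 hy0
      have hP : 0 < -b * (y - y₁) * (y - y₂) * (y - y₃) := hPpos y hy
      have hsP : 0 < Real.sqrt (-b * (y - y₁) * (y - y₂) * (y - y₃)) := Real.sqrt_pos.2 hP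
      have h2 : Real.sqrt y ^ 2 = y := Real.sq_sqrt hy0.le
      have h4 : Real.sqrt y ^ 4 = y ^ 2 := by
        rw [show (4 : ℕ) = 2 * 2 from rfl, pow_mul, h2]
      have hval : 2 * (E - (J ^ 2 / (2 * Real.sqrt y ^ 2) + a * Real.sqrt y ^ 2 / 2
          + b * Real.sqrt y ^ 4 / 4))
          = (-b * (y - y₁) * (y - y₂) * (y - y₃)) / (2 * y) := by
        rw [h2, h4, eq_div_iff (by positivity)]
        have hp := hpoly y
        field_simp
        nlinarith [hp]
      simp only [hF, hG, smul_eq_mul]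
      rw [hval, Real.sqrt_div hP.le, Real.sqrt_mul (by norm_num : (0:ℝ) ≤ 2) y,
        abs_of_pos (by positivity)]
      have hs2 : (0:ℝ) < Real.sqrt 2 := by positivity
      exact halg1 _ _ _ hs0 hsP hs2
    rw [intervalIntegral.integral_of_le (Real.sqrt_le_sqrt h12.le),
      intervalIntegral.integral_of_le h12.le,
      MeasureTheory.integral_Ioc_eq_integral_Ioo, MeasureTheory.integral_Ioc_eq_integral_Ioo,
      key, hcong, MeasureTheory.integral_const_mul]
    ring
  · -- second equality, substitution y = S(φ)
    have hpi : (0:ℝ) < Real.pi := Real.pi_pos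
    set S : ℝ → ℝ := fun φ => y₁ * Real.cos φ ^ 2 + y₂ * Real.sin φ ^ 2 with hS
    have hS1 : ∀ φ, S φ - y₁ = (y₂ - y₁) * Real.sin φ ^ 2 := by
      intro φ; rw [hS]; simp only; rw [Real.cos_sq']; ring
    have hS2 : ∀ φ, S φ - y₂ = -((y₂ - y₁) * Real.cos φ ^ 2) := by
      intro φ; rw [hS]; simp only; rw [Real.sin_sq]; ring
    have hIcc : ∀ φ, S φ ∈ Set.Icc y₁ y₂ := by
      intro φ
      have h1' := hS1 φ; have h2' := hS2 φ
      constructor <;> nlinarith [sq_nonneg (Real.sin φ), sq_nonneg (Real.cos φ)]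
    have hderivS : ∀ φ ∈ Set.Ioo (0:ℝ) (Real.pi / 2),
        HasDerivWithinAt S ((y₂ - y₁) * (2 * Real.sin φ * Real.cos φ))
          (Set.Ioo (0:ℝ) (Real.pi / 2)) φ := by
      intro φ _
      have h := (((Real.hasDerivAt_cos φ).pow 2).const_mul y₁).add
        (((Real.hasDerivAt_sin φ).pow 2).const_mul y₂)
      exact h.hasDerivWithinAt.congr_deriv (by push_cast; ring)
    have hinjS : Set.InjOn S (Set.Ioo (0:ℝ) (Real.pi / 2)) := by
      intro u hu v hv h
      have hsu : 0 ≤ Real.sin u := Real.sin_nonneg_of_nonneg_of_le_pi hu.1.le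
        (by nlinarith [hu.2])
      have hsv : 0 ≤ Real.sin v := Real.sin_nonneg_of_nonneg_of_le_pi hv.1.le
        (by nlinarith [hv.2])
      have hsq : Real.sin u ^ 2 = Real.sin v ^ 2 := by
        have h1' := hS1 u; have h2' := hS1 v
        have : (y₂ - y₁) * Real.sin u ^ 2 = (y₂ - y₁) * Real.sin v ^ 2 := by
          rw [← h1', ← h2', h]
        exact mul_left_cancel₀ (by linarith : y₂ - y₁ ≠ 0) this
      have hsin : Real.sin u = Real.sin v := by nlinarith [hsq]
      exact Real.injOn_sin ⟨by linarith [hu.1], hu.2.le⟩ ⟨by linarith [hv.1], hv.2.le⟩ hsin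
    have himgS : S '' Set.Ioo (0:ℝ) (Real.pi / 2) = Set.Ioo y₁ y₂ := by
      ext y
      constructor
      · rintro ⟨φ, hφ, rfl⟩
        have hsin : 0 < Real.sin φ := Real.sin_pos_of_pos_of_lt_pi hφ.1 (by linarith [hφ.2])
        have hcos : 0 < Real.cos φ := Real.cos_pos_of_mem_Ioo ⟨by linarith [hφ.1], hφ.2⟩
        have h1' := hS1 φ; have h2' := hS2 φ
        constructor <;> nlinarith [pow_pos hsin 2, pow_pos hcos 2]
      · intro hy
        set t : ℝ := (y - y₁) / (y₂ - y₁) with ht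
        have ht0 : 0 < t := div_pos (by linarith [hy.1]) (by linarith)
        have ht1 : t < 1 := (div_lt_one (by linarith)).2 (by linarith [hy.2])
        have hst0 : 0 < Real.sqrt t := Real.sqrt_pos.2 ht0
        have hst1 : Real.sqrt t < 1 := by
          rw [show (1:ℝ) = Real.sqrt 1 from (Real.sqrt_one).symm]
          exact Real.sqrt_lt_sqrt ht0.le ht1
        refine ⟨Real.arcsin (Real.sqrt t), ⟨Real.arcsin_pos.2 hst0,
          Real.arcsin_lt_pi_div_two.2 hst1⟩, ?_⟩
        have hsin : Real.sin (Real.arcsin (Real.sqrt t)) = Real.sqrt t :=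
          Real.sin_arcsin (by linarith [Real.sqrt_nonneg t]) hst1.le
        have hs2 : Real.sin (Real.arcsin (Real.sqrt t)) ^ 2 = t := by
          rw [hsin]; exact Real.sq_sqrt ht0.le
        have hkey := hS1 (Real.arcsin (Real.sqrt t))
        rw [hs2] at hkey
        have hne : y₂ - y₁ ≠ 0 := ne_of_gt (by linarith)
        have : (y₂ - y₁) * t = y - y₁ := by
          rw [ht, mul_comm]; exact div_mul_cancel₀ _ hne
        linarith [hkey, this]
    have keyS := MeasureTheory.integral_image_eq_integral_abs_deriv_smul
      measurableSet_Ioo hderivS hinjS G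
    rw [himgS] at keyS
    have hcongS : ∫ φ in Set.Ioo (0:ℝ) (Real.pi / 2),
        |(y₂ - y₁) * (2 * Real.sin φ * Real.cos φ)| • G (S φ)
        = ∫ φ in Set.Ioo (0:ℝ) (Real.pi / 2), 2 * H φ := by
      refine MeasureTheory.setIntegral_congr_fun measurableSet_Ioo fun φ hφ => ?_
      have hsin : 0 < Real.sin φ := Real.sin_pos_of_pos_of_lt_pi hφ.1 (by linarith [hφ.2])
      have hcos : 0 < Real.cos φ := Real.cos_pos_of_mem_Ioo ⟨by linarith [hφ.1], hφ.2⟩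
      have hc : 0 < b * (S φ - y₃) := hby3 _ (hIcc φ)
      have hd : 0 < (y₂ - y₁) * Real.sin φ * Real.cos φ :=
        mul_pos (mul_pos (by linarith) hsin) hcos
      have hA : -b * (S φ - y₁) * (S φ - y₂) * (S φ - y₃)
          = (b * (S φ - y₃)) * ((y₂ - y₁) * Real.sin φ * Real.cos φ) ^ 2 := by
        rw [hS1, hS2]; ring
      have hsc : 0 < Real.sqrt (b * (S φ - y₃)) := Real.sqrt_pos.2 hc
      simp only [hG, hH, smul_eq_mul]
      rw [hA, Real.sqrt_mul hc.le, Real.sqrt_sq hd.le, abs_of_pos (by nlinarith [hd])]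
      exact halg2 _ _ _ _ hsin.ne' hcos.ne' (by linarith) hsc.ne'
    rw [intervalIntegral.integral_of_le h12.le,
      intervalIntegral.integral_of_le (by positivity : (0:ℝ) ≤ Real.pi / 2),
      MeasureTheory.integral_Ioc_eq_integral_Ioo, MeasureTheory.integral_Ioc_eq_integral_Ioo,
      keyS, hcongS, MeasureTheory.integral_const_mul]
    ring
end

section
/- Let a, b, E, J ∈ ℝ with b ≠ 0, and let y₁, y₂, y₃ ∈ ℝ satisfy 0 < y₁ < y₂, b·(y − y₃) > 0 for all y ∈ [y₁, y₂], and the polynomial identity −b·y³ − 2a·y² + 4E·y − 2J² = −b·(y − y₁)·(y − y₂)·(y − y₃) for all y ∈ ℝ. Then, with V_J(r) = J²/(2r²) + a·r²/2 + b·r⁴/4 and S(φ) = y₁·cos²φ + y₂·sin²φ, one has ∫_{√y₁}^{√y₂} r²·(2(E − V_J(r)))^{−1/2} dr = √2·∫_0^{π/2} S(φ)·(b·(S(φ) − y₃))^{−1/2} dφ. -/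
open intervalIntegral Real

/-- The two expressions for the mass over one period (changes of variables `r = √y`
and `y = S(φ) = y₁ cos²φ + y₂ sin²φ`). -/
theorem stmt_8 (a b E J : ℝ) (hb : b ≠ 0) (y₁ y₂ y₃ : ℝ)
    (h1 : 0 < y₁) (h12 : y₁ < y₂)
    (hby3 : ∀ y ∈ Set.Icc y₁ y₂, 0 < b * (y - y₃))
    (hpoly : ∀ y : ℝ, -b * y ^ 3 - 2 * a * y ^ 2 + 4 * E * y - 2 * J ^ 2
        = -b * (y - y₁) * (y - y₂) * (y - y₃)) :
    (∫ r in Real.sqrt y₁..Real.sqrt y₂,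
        r ^ 2 / Real.sqrt (2 * (E - (J ^ 2 / (2 * r ^ 2) + a * r ^ 2 / 2 + b * r ^ 4 / 4))))
      = Real.sqrt 2 * ∫ φ in (0:ℝ)..(Real.pi / 2),
          (y₁ * Real.cos φ ^ 2 + y₂ * Real.sin φ ^ 2)
            / Real.sqrt (b * ((y₁ * Real.cos φ ^ 2 + y₂ * Real.sin φ ^ 2) - y₃)) := by
  have hπ : (0:ℝ) < Real.pi / 2 := by positivity
  set S : ℝ → ℝ := fun φ => y₁ * Real.cos φ ^ 2 + y₂ * Real.sin φ ^ 2 with hS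
  set g : ℝ → ℝ := fun φ => Real.sqrt (S φ) with hg
  set g' : ℝ → ℝ := fun φ => (y₂ - y₁) * Real.sin φ * Real.cos φ / Real.sqrt (S φ) with hg'
  have hSalt : ∀ φ, S φ = y₁ + (y₂ - y₁) * Real.sin φ ^ 2 := by
    intro φ
    simp only [hS]
    rw [Real.cos_sq']
    ring
  have hSIcc : ∀ φ, S φ ∈ Set.Icc y₁ y₂ := by
    intro φ
    rw [hSalt]
    constructor
    · nlinarith [sq_nonneg (Real.sin φ)]
    · nlinarith [Real.sin_sq_le_one φ]
  have hSpos : ∀ φ, 0 < S φ := fun φ => lt_of_lt_of_le h1 (hSIcc φ).1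
  have hSderiv : ∀ φ, HasDerivAt S (y₁ * (2 * Real.cos φ * (-Real.sin φ))
      + y₂ * (2 * Real.sin φ * Real.cos φ)) φ := by
    intro φ
    have h1' : HasDerivAt (fun φ => Real.cos φ ^ 2) (2 * Real.cos φ ^ 1 * (-Real.sin φ)) φ :=
      (Real.hasDerivAt_cos φ).pow 2
    have h2' : HasDerivAt (fun φ => Real.sin φ ^ 2) (2 * Real.sin φ ^ 1 * Real.cos φ) φ :=
      (Real.hasDerivAt_sin φ).pow 2
    have := (h1'.const_mul y₁).add (h2'.const_mul y₂)
    refine this.congr_deriv ?_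
    ring
  have hgderiv : ∀ φ, HasDerivAt g (g' φ) φ := by
    intro φ
    have h := (Real.hasDerivAt_sqrt (hSpos φ).ne').comp φ (hSderiv φ)
    refine h.congr_deriv ?_
    have hs : Real.sqrt (S φ) ≠ 0 := (Real.sqrt_pos.mpr (hSpos φ)).ne'
    simp only [hg', Function.comp]
    field_simp
    ring
  have hmono : StrictMonoOn g (Set.Icc 0 (Real.pi / 2)) := by
    intro x hx y hy hxy
    have hsx : 0 ≤ Real.sin x :=
      Real.sin_nonneg_of_nonneg_of_le_pi hx.1 (by linarith [hx.2, Real.pi_pos])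
    have hsin : Real.sin x < Real.sin y := by
      apply Real.strictMonoOn_sin ⟨by linarith [hx.1, hπ.le], by linarith [hx.2]⟩
        ⟨by linarith [hy.1, hπ.le], by linarith [hy.2]⟩ hxy
    have hsq : Real.sin x ^ 2 < Real.sin y ^ 2 := by nlinarith
    have : S x < S y := by rw [hSalt, hSalt]; nlinarith
    exact Real.sqrt_lt_sqrt (hSpos x).le this
  have hg0 : g 0 = Real.sqrt y₁ := by simp [hg, hS]
  have hgπ : g (Real.pi / 2) = Real.sqrt y₂ := by simp [hg, hS]
  have hcont : Continuous g := by
    apply Real.continuous_sqrt.comp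
    continuity
  have himg : g '' Set.Ioo 0 (Real.pi / 2) = Set.Ioo (Real.sqrt y₁) (Real.sqrt y₂) := by
    apply Set.Subset.antisymm
    · rintro _ ⟨φ, hφ, rfl⟩
      constructor
      · rw [← hg0]
        exact hmono ⟨le_refl 0, hπ.le⟩ ⟨hφ.1.le, hφ.2.le⟩ hφ.1
      · rw [← hgπ]
        exact hmono ⟨hφ.1.le, hφ.2.le⟩ ⟨hπ.le, le_refl _⟩ hφ.2
    · have := intermediate_value_Ioo hπ.le hcont.continuousOn
      rw [hg0, hgπ] at this
      exact this
  have hinj : Set.InjOn g (Set.Ioo 0 (Real.pi / 2)) :=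
    hmono.injOn.mono Set.Ioo_subset_Icc_self
  have key : ∀ φ ∈ Set.Ioo 0 (Real.pi / 2),
      |g' φ| • ((g φ) ^ 2 / Real.sqrt (2 * (E - (J ^ 2 / (2 * (g φ) ^ 2)
          + a * (g φ) ^ 2 / 2 + b * (g φ) ^ 4 / 4))))
        = Real.sqrt 2 * (S φ / Real.sqrt (b * (S φ - y₃))) := by
    intro φ hφ
    have hn : 0 < Real.sin φ := Real.sin_pos_of_pos_of_lt_pi hφ.1
      (by linarith [hφ.2, Real.pi_pos])
    have hc : 0 < Real.cos φ := Real.cos_pos_of_mem_Ioo ⟨by linarith [hφ.1, hπ], hφ.2⟩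
    have hs : 0 < S φ := hSpos φ
    have hK : 0 < b * (S φ - y₃) := hby3 _ (hSIcc φ)
    have hd : 0 < y₂ - y₁ := by linarith
    have hg2 : (g φ) ^ 2 = S φ := Real.sq_sqrt hs.le
    have hg4 : (g φ) ^ 4 = (S φ) ^ 2 := by
      rw [show (4:ℕ) = 2 * 2 from rfl, pow_mul, hg2]
    have hc2 : Real.cos φ ^ 2 = 1 - Real.sin φ ^ 2 := by rw [Real.cos_sq']
    have hfact : 4 * E * S φ - 2 * J ^ 2 - 2 * a * (S φ) ^ 2 - b * (S φ) ^ 3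
        = ((y₂ - y₁) * Real.sin φ * Real.cos φ) ^ 2 * (b * (S φ - y₃)) := by
      simp only [hS]
      rw [hc2]
      linear_combination (hpoly (y₁ * (1 - Real.sin φ ^ 2) + y₂ * Real.sin φ ^ 2))
        - b * (y₂ - y₁) ^ 2 * Real.sin φ ^ 2
          * ((y₁ * (1 - Real.sin φ ^ 2) + y₂ * Real.sin φ ^ 2) - y₃) * hc2
    have h2EV : 2 * (E - (J ^ 2 / (2 * (g φ) ^ 2) + a * (g φ) ^ 2 / 2 + b * (g φ) ^ 4 / 4))
        = ((y₂ - y₁) * Real.sin φ * Real.cos φ) ^ 2 * (b * (S φ - y₃)) / (2 * S φ) := by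
      rw [hg2, hg4, ← hfact]
      field_simp
      ring
    have hsqK : Real.sqrt (b * (S φ - y₃)) > 0 := Real.sqrt_pos.mpr hK
    have hsqs : Real.sqrt (S φ) > 0 := Real.sqrt_pos.mpr hs
    have hsq2 : Real.sqrt 2 > 0 := Real.sqrt_pos.mpr (by norm_num)
    have hx : 2 * (E - (J ^ 2 / (2 * (g φ) ^ 2) + a * (g φ) ^ 2 / 2 + b * (g φ) ^ 4 / 4))
        = ((y₂ - y₁) * Real.sin φ * Real.cos φ * Real.sqrt (b * (S φ - y₃))
            / (Real.sqrt 2 * Real.sqrt (S φ))) ^ 2 := by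
      have e1 : (Real.sqrt 2 * Real.sqrt (S φ)) ^ 2 = 2 * S φ := by
        rw [mul_pow, Real.sq_sqrt (by norm_num : (0:ℝ) ≤ 2), Real.sq_sqrt hs.le]
      have e2 : ((y₂ - y₁) * Real.sin φ * Real.cos φ * Real.sqrt (b * (S φ - y₃))) ^ 2
          = ((y₂ - y₁) * Real.sin φ * Real.cos φ) ^ 2 * (b * (S φ - y₃)) := by
        rw [mul_pow, Real.sq_sqrt hK.le]
      rw [h2EV, div_pow, e1, e2]
    rw [hx, Real.sqrt_sq (by positivity)]
    have habs : |g' φ| = (y₂ - y₁) * Real.sin φ * Real.cos φ / Real.sqrt (S φ) := by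
      rw [hg']
      exact abs_of_pos (by positivity)
    rw [habs, hg2, smul_eq_mul]
    have hss : Real.sqrt (S φ) * Real.sqrt (S φ) = S φ := Real.mul_self_sqrt hs.le
    have h22 : Real.sqrt 2 * Real.sqrt 2 = 2 := Real.mul_self_sqrt (by norm_num)
    field_simp
  rw [intervalIntegral.integral_of_le (Real.sqrt_le_sqrt h12.le),
    intervalIntegral.integral_of_le hπ.le,
    MeasureTheory.integral_Ioc_eq_integral_Ioo, MeasureTheory.integral_Ioc_eq_integral_Ioo,
    ← himg,
    MeasureTheory.integral_image_eq_integral_abs_deriv_smul measurableSet_Ioo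
      (fun x _ => (hgderiv x).hasDerivWithinAt) hinj,
    ← MeasureTheory.integral_const_mul]
  exact MeasureTheory.setIntegral_congr_fun measurableSet_Ioo key
end

section
/- Let y₁, y₂, y₃ ∈ ℝ with y₁ < y₂ < y₃ and let p > 0. Then ∫_0^{π/2} (sin²φ − cos²φ)·(y₃ − y₁·cos²φ − y₂·sin²φ)^{−p} dφ > 0. -/
/-- If `y₁ < y₂ < y₃` and `p > 0`, then
`∫_0^{π/2} (sin²φ - cos²φ) (y₃ - y₁ cos²φ - y₂ sin²φ)^{-p} dφ > 0`. -/
theorem stmt_11 (y₁ y₂ y₃ : ℝ) (h12 : y₁ < y₂) (h23 : y₂ < y₃) (p : ℝ) (hp : 0 < p) :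
    0 < ∫ φ in (0:ℝ)..(Real.pi / 2),
      (Real.sin φ ^ 2 - Real.cos φ ^ 2)
        * (y₃ - y₁ * Real.cos φ ^ 2 - y₂ * Real.sin φ ^ 2) ^ (-p) := by
  have pi_pos := Real.pi_pos
  set f : ℝ → ℝ := fun φ =>
    (Real.sin φ ^ 2 - Real.cos φ ^ 2)
      * (y₃ - y₁ * Real.cos φ ^ 2 - y₂ * Real.sin φ ^ 2) ^ (-p) with hf
  have hbase : ∀ φ : ℝ, 0 < y₃ - y₁ * Real.cos φ ^ 2 - y₂ * Real.sin φ ^ 2 := by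
    intro φ
    rw [Real.sin_sq φ]
    nlinarith [mul_nonneg (sub_nonneg.2 h12.le) (sq_nonneg (Real.cos φ))]
  have hbase' : ∀ φ : ℝ, 0 < y₃ - y₁ * Real.sin φ ^ 2 - y₂ * Real.cos φ ^ 2 := by
    intro φ
    rw [Real.cos_sq' φ]
    nlinarith [mul_nonneg (sub_nonneg.2 h12.le) (sq_nonneg (Real.sin φ))]
  have hcont : Continuous f := by
    apply Continuous.mul
    · continuity
    · apply Continuous.rpow_const
      · continuity
      · intro x; exact Or.inl (ne_of_gt (hbase x))
  -- g φ = f φ + f (π/2 - φ)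
  set g : ℝ → ℝ := fun φ => f φ + f (Real.pi / 2 - φ) with hg
  have hcontg : Continuous g := hcont.add (hcont.comp (by continuity))
  have hgeq : ∀ φ : ℝ, g φ =
      (Real.sin φ ^ 2 - Real.cos φ ^ 2)
        * ((y₃ - y₁ * Real.cos φ ^ 2 - y₂ * Real.sin φ ^ 2) ^ (-p)
          - (y₃ - y₁ * Real.sin φ ^ 2 - y₂ * Real.cos φ ^ 2) ^ (-p)) := by
    intro φ
    simp only [hg, hf, Real.sin_pi_div_two_sub, Real.cos_pi_div_two_sub]
    ring
  have hA : ∀ φ : ℝ, Real.cos φ ^ 2 ≤ Real.sin φ ^ 2 →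
      y₃ - y₁ * Real.sin φ ^ 2 - y₂ * Real.cos φ ^ 2
        ≥ y₃ - y₁ * Real.cos φ ^ 2 - y₂ * Real.sin φ ^ 2 := by
    intro φ h; nlinarith
  have hgnonneg : ∀ φ : ℝ, 0 ≤ g φ := by
    intro φ
    rw [hgeq]
    rcases le_total (Real.cos φ ^ 2) (Real.sin φ ^ 2) with h | h
    · apply mul_nonneg (by linarith)
      have := Real.rpow_le_rpow_of_nonpos (hbase φ) (hA φ h) (by linarith : -p ≤ 0)
      linarith
    · have hB : y₃ - y₁ * Real.sin φ ^ 2 - y₂ * Real.cos φ ^ 2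
          ≤ y₃ - y₁ * Real.cos φ ^ 2 - y₂ * Real.sin φ ^ 2 := by nlinarith
      have hle := Real.rpow_le_rpow_of_nonpos (hbase' φ) hB (by linarith : -p ≤ 0)
      nlinarith [hle]
  have hgpos : ∀ φ ∈ Set.Ioo (Real.pi / 3) (Real.pi / 2), 0 < g φ := by
    intro φ hφ
    rw [hgeq]
    have hsc : Real.cos φ ^ 2 < Real.sin φ ^ 2 := by
      have h2 : Real.cos (2 * φ) < 0 := by
        apply Real.cos_neg_of_pi_div_two_lt_of_lt <;> cases hφ <;> linarith
      rw [Real.cos_two_mul] at h2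
      nlinarith [Real.sin_sq_add_cos_sq φ]
    have hBA : y₃ - y₁ * Real.cos φ ^ 2 - y₂ * Real.sin φ ^ 2
        < y₃ - y₁ * Real.sin φ ^ 2 - y₂ * Real.cos φ ^ 2 := by nlinarith
    have := Real.rpow_lt_rpow_of_neg (hbase φ) hBA (by linarith : -p < 0)
    apply mul_pos (by linarith) (by linarith)
  -- reflection identity
  have hrefl : (∫ φ in (0:ℝ)..(Real.pi / 2), f (Real.pi / 2 - φ))
      = ∫ φ in (0:ℝ)..(Real.pi / 2), f φ := by
    rw [intervalIntegral.integral_comp_sub_left f (Real.pi / 2)]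
    norm_num
  have hif : IntervalIntegrable f MeasureTheory.volume 0 (Real.pi / 2) :=
    hcont.intervalIntegrable _ _
  have hif' : IntervalIntegrable (fun φ => f (Real.pi / 2 - φ))
      MeasureTheory.volume 0 (Real.pi / 2) :=
    (hcont.comp (by continuity)).intervalIntegrable _ _
  have hsum : (∫ φ in (0:ℝ)..(Real.pi / 2), g φ)
      = 2 * ∫ φ in (0:ℝ)..(Real.pi / 2), f φ := by
    rw [hg]
    rw [intervalIntegral.integral_add hif hif', hrefl]
    ring
  have h1 : 0 ≤ ∫ φ in (0:ℝ)..(Real.pi / 3), g φ := by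
    apply intervalIntegral.integral_nonneg (by linarith)
    intro x _; exact hgnonneg x
  have h2 : 0 < ∫ φ in (Real.pi / 3)..(Real.pi / 2), g φ := by
    apply intervalIntegral.intervalIntegral_pos_of_pos_on
      (hcontg.intervalIntegrable _ _) hgpos (by linarith)
  have hsplit : (∫ φ in (0:ℝ)..(Real.pi / 3), g φ)
      + (∫ φ in (Real.pi / 3)..(Real.pi / 2), g φ)
      = ∫ φ in (0:ℝ)..(Real.pi / 2), g φ :=
    intervalIntegral.integral_add_adjacent_intervals
      (hcontg.intervalIntegrable _ _) (hcontg.intervalIntegrable _ _)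
  have : 0 < ∫ φ in (0:ℝ)..(Real.pi / 2), g φ := by linarith
  rw [hsum] at this
  linarith
end

section
/- Let Q ∈ (1/√3, 1) and set M = (1 − Q²)·π·√2/(2·√(3Q² − 1)) and P = Q·M. Then M > 0 and P = (M/π)·√(3M² + π² − √(9M⁴ + 4M²·π²)). -/
/-- For `Q ∈ (1/√3, 1)`, the limiting mass `M = (1-Q²)π√2/(2√(3Q²-1))` and momentum
`P = QM` satisfy `M > 0` and lie on the boundary curve
`P = (M/π)√(3M² + π² - √(9M⁴ + 4M²π²))`. -/
theorem stmt_15 (Q : ℝ) (hQ1 : 1 / Real.sqrt 3 < Q) (hQ2 : Q < 1)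
    (M P : ℝ)
    (hM : M = (1 - Q ^ 2) * Real.pi * Real.sqrt 2 / (2 * Real.sqrt (3 * Q ^ 2 - 1)))
    (hP : P = Q * M) :
    0 < M ∧
    P = (M / Real.pi) * Real.sqrt (3 * M ^ 2 + Real.pi ^ 2
        - Real.sqrt (9 * M ^ 4 + 4 * M ^ 2 * Real.pi ^ 2)) := by
  have h3 : (0:ℝ) < Real.sqrt 3 := Real.sqrt_pos.2 (by norm_num)
  have hQ0 : 0 < Q := lt_trans (by positivity) hQ1
  have hQsq : 1/3 < Q ^ 2 := by
    have h := pow_lt_pow_left₀ hQ1 (by positivity) (by norm_num : 2 ≠ 0)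
    have h2 : (1 / Real.sqrt 3) ^ 2 = 1/3 := by
      rw [div_pow, Real.sq_sqrt (by norm_num : (0:ℝ) ≤ 3)]; norm_num
    rwa [h2] at h
  have hs : 0 < 3 * Q ^ 2 - 1 := by linarith
  have hss : 0 < Real.sqrt (3 * Q ^ 2 - 1) := Real.sqrt_pos.2 hs
  have hQ2' : 0 < 1 - Q ^ 2 := by nlinarith
  have hpi := Real.pi_pos
  have hMpos : 0 < M := by
    rw [hM]
    have h2 : (0:ℝ) < Real.sqrt 2 := Real.sqrt_pos.2 (by norm_num)
    positivity
  refine ⟨hMpos, ?_⟩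
  have hM2 : M ^ 2 * (2 * (3 * Q ^ 2 - 1)) = Real.pi ^ 2 * (1 - Q ^ 2) ^ 2 := by
    have hsq : Real.sqrt (3 * Q ^ 2 - 1) ^ 2 = 3 * Q ^ 2 - 1 := Real.sq_sqrt hs.le
    have h2 : Real.sqrt 2 ^ 2 = 2 := Real.sq_sqrt (by norm_num)
    have key : M * (2 * Real.sqrt (3 * Q ^ 2 - 1)) = (1 - Q ^ 2) * Real.pi * Real.sqrt 2 := by
      rw [hM]; field_simp
      exact div_self (by rw [show Q ^ 2 * 3 - 1 = 3 * Q ^ 2 - 1 by ring]; exact hss.ne')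
    linear_combination (M * Real.sqrt (3 * Q ^ 2 - 1)
        + (1 - Q ^ 2) * Real.pi * Real.sqrt 2 / 2) * key
      - 2 * M ^ 2 * hsq + Real.pi ^ 2 * (1 - Q ^ 2) ^ 2 / 2 * h2
  have hinner : Real.sqrt (9 * M ^ 4 + 4 * M ^ 2 * Real.pi ^ 2)
      = 3 * M ^ 2 + Real.pi ^ 2 * (1 - Q ^ 2) := by
    rw [show 9 * M ^ 4 + 4 * M ^ 2 * Real.pi ^ 2
        = (3 * M ^ 2 + Real.pi ^ 2 * (1 - Q ^ 2)) ^ 2 by nlinarith [hM2]]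
    exact Real.sqrt_sq (by positivity)
  rw [hinner, show 3 * M ^ 2 + Real.pi ^ 2 - (3 * M ^ 2 + Real.pi ^ 2 * (1 - Q ^ 2))
      = (Q * Real.pi) ^ 2 by ring, Real.sqrt_sq (by positivity), hP]
  field_simp
end

section
/- Let T > 0 and let u : ℝ → ℂ be continuously differentiable. Set m₀ = (1/2)·∫_0^T |u(x)|² dx, p₀ = (1/2)·Im ∫_0^T u(x)·conj(u'(x)) dx and k₀ = (1/2)·∫_0^T |u'(x)|² dx. Then p₀² ≤ m₀·k₀. Moreover, if p₀² = m₀·k₀ and u is not identically zero on [0, T], then there exist c ∈ ℂ with c ≠ 0 and α ∈ ℝ such that u(x) = c·e^{iαx} for all x ∈ [0, T]. -/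
open MeasureTheory intervalIntegral Set

private lemma stmt16_ptwise (α : ℝ) (a b : ℂ) :
    ‖b - Complex.I * α * a‖^2 = ‖b‖^2 + 2*α*(a * (starRingEnd ℂ) b).im + α^2 * ‖a‖^2 := by
  simp only [Complex.sq_norm, Complex.normSq_apply, Complex.sub_re,
    Complex.sub_im, Complex.mul_re, Complex.mul_im, Complex.I_re, Complex.I_im,
    Complex.ofReal_re, Complex.ofReal_im, Complex.conj_re, Complex.conj_im]
  ring

private lemma stmt16_zero (T : ℝ) (hT : 0 < T) (f : ℝ → ℝ) (hf : Continuous f)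
    (h0 : ∀ x, 0 ≤ f x) (hi : (∫ x in (0:ℝ)..T, f x) = 0) : ∀ x ∈ Icc (0:ℝ) T, f x = 0 := by
  have h1 : (∫ x in Ioc (0:ℝ) T, f x) = 0 := by
    rwa [intervalIntegral.integral_of_le hT.le] at hi
  have hae : f =ᵐ[volume.restrict (Ioc (0:ℝ) T)] 0 :=
    (integral_eq_zero_iff_of_nonneg (fun x => h0 x) hf.integrableOn_Ioc).mp h1
  have hae2 : f =ᵐ[volume.restrict (Icc (0:ℝ) T)] 0 := by
    rwa [Measure.restrict_congr_set (Ioc_ae_eq_Icc (μ := volume) (a := (0:ℝ)) (b := T))] at hae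
  exact fun x hx =>
    Measure.eqOn_Icc_of_ae_eq (volume) hT.ne hae2 hf.continuousOn continuousOn_const hx

/-- Cauchy–Schwarz between mass, momentum and kinetic energy: `p₀² ≤ m₀ k₀`, with
equality (for `u` not identically zero) only for plane waves `u(x) = c e^{iαx}`. -/
theorem stmt_16 (T : ℝ) (hT : 0 < T) (u : ℝ → ℂ) (hu : ContDiff ℝ 1 u)
    (m₀ p₀ k₀ : ℝ)
    (hm : m₀ = (1/2) * ∫ x in (0:ℝ)..T, ‖u x‖ ^ 2)
    (hp : p₀ = (1/2) * (∫ x in (0:ℝ)..T, u x * (starRingEnd ℂ) (deriv u x)).im)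
    (hk : k₀ = (1/2) * ∫ x in (0:ℝ)..T, ‖deriv u x‖ ^ 2) :
    p₀ ^ 2 ≤ m₀ * k₀ ∧
    (p₀ ^ 2 = m₀ * k₀ → (∃ x ∈ Set.Icc (0:ℝ) T, u x ≠ 0) →
      ∃ c : ℂ, c ≠ 0 ∧ ∃ α : ℝ, ∀ x ∈ Set.Icc (0:ℝ) T,
        u x = c * Complex.exp (Complex.I * α * x)) := by
  have cu : Continuous u := hu.continuous
  have hud : Differentiable ℝ u := hu.differentiable one_ne_zero
  have cu' : Continuous (deriv u) := (hu.iterate_deriv' 0 1).continuous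
  have cprod : Continuous (fun x => u x * (starRingEnd ℂ) (deriv u x)) :=
    cu.mul (Complex.continuous_conj.comp cu')
  -- expansion of the integral
  have hexp : ∀ α : ℝ, (∫ x in (0:ℝ)..T, ‖deriv u x - Complex.I * α * u x‖^2)
      = 2*k₀ + 4*α*p₀ + 2*α^2*m₀ := by
    intro α
    have him : (∫ x in (0:ℝ)..T, u x * (starRingEnd ℂ) (deriv u x)).im
        = ∫ x in (0:ℝ)..T, (u x * (starRingEnd ℂ) (deriv u x)).im := by
      rw [intervalIntegral.integral_of_le hT.le, intervalIntegral.integral_of_le hT.le]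
      exact (integral_im cprod.integrableOn_Ioc).symm
    have i1 : IntervalIntegrable (fun x => ‖deriv u x‖^2) volume 0 T :=
      ((cu'.norm.pow 2)).intervalIntegrable _ _
    have i2 : IntervalIntegrable
        (fun x => 2*α*(u x * (starRingEnd ℂ) (deriv u x)).im) volume 0 T :=
      ((continuous_const.mul (Complex.continuous_im.comp cprod))).intervalIntegrable _ _
    have i3 : IntervalIntegrable (fun x => α^2 * ‖u x‖^2) volume 0 T :=
      (continuous_const.mul (cu.norm.pow 2)).intervalIntegrable _ _
    have key : (∫ x in (0:ℝ)..T, ‖deriv u x - Complex.I * α * u x‖^2)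
        = (∫ x in (0:ℝ)..T, ‖deriv u x‖^2)
          + 2*α*(∫ x in (0:ℝ)..T, (u x * (starRingEnd ℂ) (deriv u x)).im)
          + α^2 * (∫ x in (0:ℝ)..T, ‖u x‖^2) := by
      calc (∫ x in (0:ℝ)..T, ‖deriv u x - Complex.I * α * u x‖^2)
          = ∫ x in (0:ℝ)..T, (‖deriv u x‖^2 + 2*α*(u x * (starRingEnd ℂ) (deriv u x)).im
              + α^2 * ‖u x‖^2) :=
          intervalIntegral.integral_congr fun x _ => stmt16_ptwise α (u x) (deriv u x)
        _ = _ := by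
          rw [intervalIntegral.integral_add (i1.add i2) i3, intervalIntegral.integral_add i1 i2,
            intervalIntegral.integral_const_mul, intervalIntegral.integral_const_mul]
    rw [key, ← him, hm, hp, hk]; ring
  -- nonnegativity of the quadratic
  have hq : ∀ α : ℝ, 0 ≤ 2*k₀ + 4*α*p₀ + 2*α^2*m₀ := by
    intro α
    rw [← hexp α]
    apply intervalIntegral.integral_nonneg hT.le
    intro x _
    positivity
  have hm0 : 0 ≤ m₀ := by
    rw [hm]
    have : 0 ≤ ∫ x in (0:ℝ)..T, ‖u x‖ ^ 2 :=
      intervalIntegral.integral_nonneg hT.le (fun x _ => by positivity)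
    linarith
  -- the inequality
  have hineq : p₀ ^ 2 ≤ m₀ * k₀ := by
    rcases eq_or_lt_of_le hm0 with hm0' | hm0'
    · have hp0 : p₀ = 0 := by
        by_contra hne
        have := hq (-(2*k₀+1)/(4*p₀))
        rw [← hm0'] at this
        have hval : 4 * (-(2*k₀+1)/(4*p₀)) * p₀ = -(2*k₀+1) := by field_simp
        rw [hval] at this
        linarith
      have hk0 : 0 ≤ k₀ := by have := hq 0; linarith
      rw [hp0, ← hm0']; nlinarith
    · have := hq (-(p₀/m₀))
      have h2 : 2*k₀ + 4*(-(p₀/m₀))*p₀ + 2*(-(p₀/m₀))^2*m₀ = 2*k₀ - 2*(p₀^2/m₀) := by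
        field_simp; ring
      rw [h2] at this
      have h3 : p₀^2/m₀ ≤ k₀ := by linarith
      calc p₀^2 = (p₀^2/m₀) * m₀ := by field_simp
        _ ≤ k₀ * m₀ := mul_le_mul_of_nonneg_right h3 hm0
        _ = m₀ * k₀ := mul_comm _ _
  refine ⟨hineq, fun heq ⟨x₀, hx₀, hux₀⟩ => ?_⟩
  -- m₀ > 0
  have hm0' : 0 < m₀ := by
    rcases eq_or_lt_of_le hm0 with h | h
    · exfalso
      have hi0 : (∫ x in (0:ℝ)..T, ‖u x‖ ^ 2) = 0 := by
        have : (2:ℝ) * m₀ = ∫ x in (0:ℝ)..T, ‖u x‖ ^ 2 := by rw [hm]; ring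
        rw [← this, ← h]; ring
      have := stmt16_zero T hT (fun x => ‖u x‖^2) (cu.norm.pow 2) (fun x => by positivity)
        hi0 x₀ hx₀
      simp only [ne_eq, OfNat.ofNat_ne_zero, not_false_eq_true, pow_eq_zero_iff, norm_eq_zero] at this
      exact hux₀ (by simpa using this)
    · exact h
  set α : ℝ := -(p₀/m₀) with hα
  -- the integral vanishes at α
  have hzero : (∫ x in (0:ℝ)..T, ‖deriv u x - Complex.I * α * u x‖^2) = 0 := by
    rw [hexp α, hα]
    field_simp
    nlinarith [heq, hm0']
  have hode : ∀ x ∈ Icc (0:ℝ) T, deriv u x = Complex.I * α * u x := by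
    intro x hx
    have := stmt16_zero T hT (fun x => ‖deriv u x - Complex.I * α * u x‖^2)
      (((cu'.sub (continuous_const.mul cu)).norm.pow 2)) (fun x => by positivity) hzero x hx
    have h2 : deriv u x = Complex.I * α * u x := by
      simpa [pow_eq_zero_iff, norm_eq_zero, sub_eq_zero] using this
    exact h2
  -- constancy of g
  set g : ℝ → ℂ := fun x => u x * Complex.exp (-(Complex.I * α * x)) with hg
  have hgderiv : ∀ x : ℝ, HasDerivAt g
      ((deriv u x - Complex.I * α * u x) * Complex.exp (-(Complex.I * α * x))) x := by
    intro x
    have h1 : HasDerivAt u (deriv u x) x := (hud x).hasDerivAt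
    have h2 : HasDerivAt (fun x : ℝ => Complex.exp (-(Complex.I * α * x)))
        (-(Complex.I * α) * Complex.exp (-(Complex.I * α * x))) x := by
      have := ((hasDerivAt_id x).ofReal_comp.const_mul (-(Complex.I * α))).cexp
      simpa [mul_comm, mul_assoc, mul_left_comm, neg_mul] using this
    have := h1.mul h2
    exact this.congr_deriv (by ring)
  have hconst : ∀ x ∈ Icc (0:ℝ) T, g x = g 0 := by
    apply constant_of_has_deriv_right_zero
    · exact ((cu.mul (Complex.continuous_exp.comp ((continuous_const.mul Complex.continuous_ofReal).neg))).continuousOn)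
    · intro x hx
      have h0 : deriv u x - Complex.I * α * u x = 0 := by
        rw [hode x (Ico_subset_Icc_self hx)]; ring
      have := hgderiv x
      rw [h0, zero_mul] at this
      exact this.hasDerivWithinAt
  refine ⟨u 0, ?_, α, ?_⟩
  · intro hc0
    have h := hconst x₀ hx₀
    simp only [hg, Complex.ofReal_zero, mul_zero, neg_zero, Complex.exp_zero, mul_one] at h
    rw [hc0] at h
    exact (mul_ne_zero hux₀ (Complex.exp_ne_zero _)) h
  · intro x hx
    have h := hconst x hx
    simp only [hg, Complex.ofReal_zero, mul_zero, neg_zero, Complex.exp_zero, mul_one] at h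
    rw [← h, mul_assoc, ← Complex.exp_add, neg_add_cancel, Complex.exp_zero, mul_one]
end
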